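/- arXiv:2604.10154 — 8 statements merged into one kernel-verified Lean document; each statement's English description precedes it below -/
import Mathlib

section
/- Let C be a monoidal category and G a 2-group (a monoidal groupoid in which every object has a weak inverse). If F : C → G is a functor equipped with natural isomorphisms F_⊗(x,y) : Fx ⊗' Fy → F(x ⊗ y) satisfying the hexagon compatibility with the associators (axiom SF1), then there exists a unique isomorphism F_1 : 1' → F1 such that (F, F_⊗, F_1) is a monoidal functor (i.e. satisfies the two unit axioms SF3). -/
/-!
Write `e = F 𝟙` and `m = F(λ_𝟙) ∘ F_⊗(𝟙, 𝟙) : e ⊗ e ⟶ e`. Since `e` is invertible in the 2-group,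
`- ⊗ e` is fully faithful, so there is exactly one `u : 𝟙' ⟶ e` with `m ∘ (u ⊗ e) = λ_e`, and any
`F₁` satisfying the left unit axiom at `𝟙` must be this `u`. Axiom (SF1) with two unit arguments
makes the maps `F(λ_x) ∘ F_⊗(𝟙, x)` and `F(ρ_x) ∘ F_⊗(x, 𝟙)` associative actions of `(e, m)`; as
these maps are invertible, both unit axioms for `u` at any `x` reduce to the one defining `u`.
-/

open CategoryTheory MonoidalCategory

section InvertibleObject

variable {G : Type*} [Category G] [MonoidalCategory G] {E Y : G}

def tensorRightCompIsoOfTensorIsoUnit (P : E ⊗ Y ≅ 𝟙_ G) : tensorRight E ⋙ tensorRight Y ≅ 𝟭 G :=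
  (tensorRightTensor E Y).symm ≪≫ (curriedTensor G).flip.mapIso P ≪≫ rightUnitorNatIso G

lemma faithful_tensorRight_of_tensor_iso_unit (P : E ⊗ Y ≅ 𝟙_ G) : (tensorRight E).Faithful :=
  Functor.Faithful.of_comp_iso (tensorRightCompIsoOfTensorIsoUnit P)

lemma full_tensorRight_of_tensor_iso_unit (P : E ⊗ Y ≅ 𝟙_ G) (Q : Y ⊗ E ≅ 𝟙_ G) :
    (tensorRight E).Full :=
  have := faithful_tensorRight_of_tensor_iso_unit Q
  have := Functor.Full.of_iso (tensorRightCompIsoOfTensorIsoUnit P).symm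
  Functor.Full.of_comp_faithful (tensorRight E) (tensorRight Y)

end InvertibleObject

namespace Tensorator

variable {C G : Type*} [Category C] [MonoidalCategory C]

section Category

variable [Category G] [MonoidalCategory G]
  (F : C ⥤ G) (Fm : ∀ x y : C, F.obj x ⊗ F.obj y ⟶ F.obj (x ⊗ y))

def Natural : Prop :=
  ∀ {x x' y y' : C} (f : x ⟶ x') (g : y ⟶ y'),
    (F.map f ⊗ₘ F.map g) ≫ Fm x' y' = Fm x y ≫ F.map (f ⊗ₘ g)

def Associative : Prop :=
  ∀ x y z : C, (Fm x y ▷ F.obj z) ≫ Fm (x ⊗ y) z ≫ F.map (α_ x y z).hom =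
    (α_ (F.obj x) (F.obj y) (F.obj z)).hom ≫ (F.obj x ◁ Fm y z) ≫ Fm x (y ⊗ z)

def leftAction (x : C) : F.obj (𝟙_ C) ⊗ F.obj x ⟶ F.obj x :=
  Fm (𝟙_ C) x ≫ F.map (λ_ x).hom

def rightAction (x : C) : F.obj x ⊗ F.obj (𝟙_ C) ⟶ F.obj x :=
  Fm x (𝟙_ C) ≫ F.map (ρ_ x).hom

variable {F Fm}

lemma Natural.whiskerRight (hnat : Natural F Fm) {x x' : C} (f : x ⟶ x') (z : C) :
    (F.map f ▷ F.obj z) ≫ Fm x' z = Fm x z ≫ F.map (f ▷ z) := by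
  simpa using hnat f (𝟙 z)

lemma Natural.whiskerLeft (hnat : Natural F Fm) (z : C) {x x' : C} (f : x ⟶ x') :
    (F.obj z ◁ F.map f) ≫ Fm z x' = Fm z x ≫ F.map (z ◁ f) := by
  simpa using hnat (𝟙 z) f

lemma leftAction_assoc (hnat : Natural F Fm) (hassoc : Associative F Fm) (x : C) :
    (leftAction F Fm (𝟙_ C) ▷ F.obj x) ≫ leftAction F Fm x =
      (α_ _ _ _).hom ≫ (F.obj (𝟙_ C) ◁ leftAction F Fm x) ≫ leftAction F Fm x := by
  have hunit : (λ_ (𝟙_ C)).hom ▷ x ≫ (λ_ x).hom =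
      (α_ (𝟙_ C) (𝟙_ C) x).hom ≫ (𝟙_ C ◁ (λ_ x).hom) ≫ (λ_ x).hom := by
    rw [leftUnitor_whiskerRight, Category.assoc, leftUnitor_naturality]
  simp only [leftAction, comp_whiskerRight, Category.assoc]
  slice_lhs 2 3 => rw [hnat.whiskerRight (λ_ (𝟙_ C)).hom x]
  slice_lhs 3 4 => rw [← F.map_comp, hunit, F.map_comp, F.map_comp]
  slice_lhs 1 3 => rw [hassoc (𝟙_ C) (𝟙_ C) x]
  slice_lhs 3 4 => rw [← hnat.whiskerLeft (𝟙_ C) (λ_ x).hom]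
  simp only [MonoidalCategory.whiskerLeft_comp, Category.assoc]

lemma rightAction_assoc (hnat : Natural F Fm) (hassoc : Associative F Fm) (x : C) :
    (rightAction F Fm x ▷ F.obj (𝟙_ C)) ≫ rightAction F Fm x =
      (α_ _ _ _).hom ≫ (F.obj x ◁ leftAction F Fm (𝟙_ C)) ≫ rightAction F Fm x := by
  have hunit : (ρ_ x).hom ▷ 𝟙_ C ≫ (ρ_ x).hom =
      (α_ x (𝟙_ C) (𝟙_ C)).hom ≫ (x ◁ (λ_ (𝟙_ C)).hom) ≫ (ρ_ x).hom := by
    rw [← triangle, Category.assoc]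
  simp only [leftAction, rightAction, comp_whiskerRight, Category.assoc]
  slice_lhs 2 3 => rw [hnat.whiskerRight (ρ_ x).hom (𝟙_ C)]
  slice_lhs 3 4 => rw [← F.map_comp, hunit, F.map_comp, F.map_comp]
  slice_lhs 1 3 => rw [hassoc x (𝟙_ C) (𝟙_ C)]
  slice_lhs 3 4 => rw [← hnat.whiskerLeft x (λ_ (𝟙_ C)).hom]
  simp only [MonoidalCategory.whiskerLeft_comp, Category.assoc]

end Category

section Groupoid

variable [Groupoid G] [MonoidalCategory G]
  {F : C ⥤ G} {Fm : ∀ x y : C, F.obj x ⊗ F.obj y ⟶ F.obj (x ⊗ y)}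

lemma leftAction_unit_whiskerRight (hnat : Natural F Fm) (hassoc : Associative F Fm) :
    leftAction F Fm (𝟙_ C) ▷ F.obj (𝟙_ C) =
      (α_ _ _ _).hom ≫ (F.obj (𝟙_ C) ◁ leftAction F Fm (𝟙_ C)) := by
  simpa only [← Category.assoc, cancel_mono] using leftAction_assoc hnat hassoc (𝟙_ C)

variable {u : 𝟙_ G ⟶ F.obj (𝟙_ C)}

lemma whiskerLeft_comp_leftAction_unit [(tensorRight (F.obj (𝟙_ C))).Faithful]
    (hnat : Natural F Fm) (hassoc : Associative F Fm)
    (hu : (u ▷ F.obj (𝟙_ C)) ≫ leftAction F Fm (𝟙_ C) = (λ_ _).hom) :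
    (F.obj (𝟙_ C) ◁ u) ≫ leftAction F Fm (𝟙_ C) = (ρ_ _).hom := by
  apply (tensorRight (F.obj (𝟙_ C))).map_injective
  change (_ ≫ _) ▷ _ = _ ▷ _
  rw [comp_whiskerRight, leftAction_unit_whiskerRight hnat hassoc, whisker_assoc]
  simp only [Category.assoc, Iso.inv_hom_id_assoc]
  rw [← MonoidalCategory.whiskerLeft_comp, hu, triangle]

lemma whiskerRight_comp_leftAction (hnat : Natural F Fm) (hassoc : Associative F Fm)
    (hu : (u ▷ F.obj (𝟙_ C)) ≫ leftAction F Fm (𝟙_ C) = (λ_ _).hom) (x : C) :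
    (u ▷ F.obj x) ≫ leftAction F Fm x = (λ_ (F.obj x)).hom := by
  rw [← cancel_epi (𝟙_ G ◁ leftAction F Fm x)]
  have hassoc' : (F.obj (𝟙_ C) ◁ leftAction F Fm x) ≫ leftAction F Fm x =
      (α_ _ _ _).inv ≫ (leftAction F Fm (𝟙_ C) ▷ F.obj x) ≫ leftAction F Fm x := by
    rw [leftAction_assoc hnat hassoc x, Iso.inv_hom_id_assoc]
  rw [whisker_exchange_assoc, hassoc', associator_inv_naturality_left_assoc,
    ← comp_whiskerRight_assoc, hu, leftUnitor_whiskerRight]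
  simp only [Category.assoc, Iso.inv_hom_id_assoc]
  rw [leftUnitor_naturality]

lemma whiskerLeft_comp_rightAction [(tensorRight (F.obj (𝟙_ C))).Faithful]
    (hnat : Natural F Fm) (hassoc : Associative F Fm)
    (hu : (u ▷ F.obj (𝟙_ C)) ≫ leftAction F Fm (𝟙_ C) = (λ_ _).hom) (x : C) :
    (F.obj x ◁ u) ≫ rightAction F Fm x = (ρ_ (F.obj x)).hom := by
  rw [← cancel_epi (rightAction F Fm x ▷ 𝟙_ G), ← whisker_exchange_assoc,
    rightAction_assoc hnat hassoc x, associator_naturality_right_assoc,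
    ← MonoidalCategory.whiskerLeft_comp_assoc, whiskerLeft_comp_leftAction_unit hnat hassoc hu,
    whiskerLeft_rightUnitor]
  simp only [Category.assoc, Iso.hom_inv_id_assoc]
  rw [rightUnitor_naturality]

lemma eq_of_whiskerRight_comp_leftAction_unit [(tensorRight (F.obj (𝟙_ C))).Faithful]
    {v : 𝟙_ G ⟶ F.obj (𝟙_ C)}
    (hu : (u ▷ F.obj (𝟙_ C)) ≫ leftAction F Fm (𝟙_ C) = (λ_ _).hom)
    (hv : (v ▷ F.obj (𝟙_ C)) ≫ leftAction F Fm (𝟙_ C) = (λ_ _).hom) : u = v :=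
  (tensorRight (F.obj (𝟙_ C))).map_injective ((cancel_mono _).mp (hu.trans hv.symm))

end Groupoid

end Tensorator

open Tensorator in
theorem stmt1_general {C G : Type*} [Category C] [MonoidalCategory C]
    [Groupoid G] [MonoidalCategory G]
    (hinv : ∀ x : G, ∃ y : G, Nonempty (x ⊗ y ≅ 𝟙_ G) ∧ Nonempty (y ⊗ x ≅ 𝟙_ G))
    (F : C ⥤ G) (Fm : ∀ x y : C, F.obj x ⊗ F.obj y ⟶ F.obj (x ⊗ y))
    (hnat : ∀ {x x' y y' : C} (f : x ⟶ x') (g : y ⟶ y'),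
      (F.map f ⊗ₘ F.map g) ≫ Fm x' y' = Fm x y ≫ F.map (f ⊗ₘ g))
    (hSF1 : ∀ x y z : C,
      (Fm x y ▷ F.obj z) ≫ Fm (x ⊗ y) z ≫ F.map (α_ x y z).hom =
        (α_ (F.obj x) (F.obj y) (F.obj z)).hom ≫ (F.obj x ◁ Fm y z) ≫ Fm x (y ⊗ z)) :
    ∃! F₁ : 𝟙_ G ⟶ F.obj (𝟙_ C), IsIso F₁ ∧
      (∀ x : C, (F₁ ▷ F.obj x) ≫ Fm (𝟙_ C) x ≫ F.map (λ_ x).hom = (λ_ (F.obj x)).hom) ∧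
      (∀ x : C, (F.obj x ◁ F₁) ≫ Fm x (𝟙_ C) ≫ F.map (ρ_ x).hom = (ρ_ (F.obj x)).hom) := by
  obtain ⟨_, ⟨p⟩, ⟨q⟩⟩ := hinv (F.obj (𝟙_ C))
  have := faithful_tensorRight_of_tensor_iso_unit p
  have := full_tensorRight_of_tensor_iso_unit p q
  obtain ⟨u, hu⟩ := (tensorRight (F.obj (𝟙_ C))).map_surjective
    ((λ_ _).hom ≫ inv (leftAction F Fm (𝟙_ C)))
  replace hu : (u ▷ F.obj (𝟙_ C)) ≫ leftAction F Fm (𝟙_ C) = (λ_ _).hom := by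
    rw [show u ▷ _ = _ from hu, Category.assoc, IsIso.inv_hom_id, Category.comp_id]
  refine ⟨u, ⟨inferInstance, whiskerRight_comp_leftAction @hnat hSF1 hu,
    whiskerLeft_comp_rightAction @hnat hSF1 hu⟩,
    fun _ ⟨_, hv, _⟩ => eq_of_whiskerRight_comp_leftAction_unit (hv (𝟙_ C)) hu⟩

/-- Let `C` be a monoidal category and `G` a 2-group (a monoidal groupoid in which every
object has a weak inverse).  If `F : C ⥤ G` is equipped with natural isomorphisms
`Fm x y : F.obj x ⊗ F.obj y ⟶ F.obj (x ⊗ y)` satisfying the associativity axiom (SF1),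
then there is a unique isomorphism `F₁ : 𝟙_ G ⟶ F.obj (𝟙_ C)` satisfying the two unit
axioms (SF3), i.e. making `(F, Fm, F₁)` a monoidal functor. -/
theorem stmt1 {C G : Type*} [Category C] [MonoidalCategory C]
    [Groupoid G] [MonoidalCategory G]
    (hinv : ∀ x : G, ∃ y : G, Nonempty (x ⊗ y ≅ 𝟙_ G) ∧ Nonempty (y ⊗ x ≅ 𝟙_ G))
    (F : C ⥤ G) (Fm : ∀ x y : C, F.obj x ⊗ F.obj y ⟶ F.obj (x ⊗ y))
    (hiso : ∀ x y : C, IsIso (Fm x y))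
    (hnat : ∀ {x x' y y' : C} (f : x ⟶ x') (g : y ⟶ y'),
      (F.map f ⊗ₘ F.map g) ≫ Fm x' y' = Fm x y ≫ F.map (f ⊗ₘ g))
    (hSF1 : ∀ x y z : C,
      (Fm x y ▷ F.obj z) ≫ Fm (x ⊗ y) z ≫ F.map (α_ x y z).hom =
        (α_ (F.obj x) (F.obj y) (F.obj z)).hom ≫ (F.obj x ◁ Fm y z) ≫ Fm x (y ⊗ z)) :
    ∃! F₁ : 𝟙_ G ⟶ F.obj (𝟙_ C), IsIso F₁ ∧
      (∀ x : C, (F₁ ▷ F.obj x) ≫ Fm (𝟙_ C) x ≫ F.map (λ_ x).hom = (λ_ (F.obj x)).hom) ∧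
      (∀ x : C, (F.obj x ◁ F₁) ≫ Fm x (𝟙_ C) ≫ F.map (ρ_ x).hom = (ρ_ (F.obj x)).hom) :=
  stmt1_general hinv F Fm hnat hSF1
end

section
/- Let C be a monoidal category and G a 2-group, and let (F, F_⊗) satisfy the associativity compatibility (SF1). An isomorphism F_1 : 1' → F1 satisfies the two unit axioms (SF3) if and only if it makes the single square commute: F(d) ∘ F_⊗(1,1) ∘ (id_{F1} ⊗' F_1) = r'_{F1}, where d : 1 ⊗ 1 → 1 is the basic unitor of C. -/
/-!
In the groupoid `G` the maps `F_⊗` and `F_1` are invertible, so whiskering by `F1 ≅ 1` is faithful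
and a unit axiom at `x` may be checked after whiskering by `F1` and composing with `F_⊗`. There (SF1) at
`(1, 1, x)`, naturality of `F_⊗` and the triangle identity turn `F1 ◁ (left unit axiom at x)` into
the square whiskered by `Fx`; likewise (SF1) at `(x, 1, 1)` turns the right unit axiom at `x`
into the left unit axiom at `1`.
-/

open CategoryTheory MonoidalCategory

namespace CategoryTheory.MonoidalCategory

variable {G : Type*} [Category G] [MonoidalCategory G]

lemma whiskerLeft_injective_of_isIso {U : G} (e : 𝟙_ G ⟶ U) [IsIso e] {A B : G}
    {f g : A ⟶ B} (h : U ◁ f = U ◁ g) : f = g := by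
  rw [← whiskerLeft_iff, ← cancel_mono (e ▷ B), whisker_exchange, whisker_exchange, h]

lemma whiskerRight_injective_of_isIso {U : G} (e : 𝟙_ G ⟶ U) [IsIso e] {A B : G}
    {f g : A ⟶ B} (h : f ▷ U = g ▷ U) : f = g := by
  rw [← whiskerRight_iff, ← cancel_mono (B ◁ e), ← whisker_exchange, ← whisker_exchange, h]

end CategoryTheory.MonoidalCategory

section UnitAxioms

variable {C G : Type*} [Category C] [MonoidalCategory C] [Category G] [MonoidalCategory G]
  {F : C ⥤ G} {Fm : ∀ x y : C, F.obj x ⊗ F.obj y ⟶ F.obj (x ⊗ y)}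

lemma whiskerLeft_map_comp_of_nat
    (hnat : ∀ {x x' y y' : C} (f : x ⟶ x') (g : y ⟶ y'),
      (F.map f ⊗ₘ F.map g) ≫ Fm x' y' = Fm x y ≫ F.map (f ⊗ₘ g))
    (x : C) {y y' : C} (g : y ⟶ y') :
    (F.obj x ◁ F.map g) ≫ Fm x y' = Fm x y ≫ F.map (x ◁ g) := by
  simpa using hnat (𝟙 x) g

lemma whiskerRight_map_comp_of_nat
    (hnat : ∀ {x x' y y' : C} (f : x ⟶ x') (g : y ⟶ y'),
      (F.map f ⊗ₘ F.map g) ≫ Fm x' y' = Fm x y ≫ F.map (f ⊗ₘ g))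
    {x x' : C} (f : x ⟶ x') (y : C) :
    (F.map f ▷ F.obj y) ≫ Fm x' y = Fm x y ≫ F.map (f ▷ y) := by
  simpa using hnat f (𝟙 y)

lemma whiskerLeft_leftUnit_comp
    (hnat : ∀ {x x' y y' : C} (f : x ⟶ x') (g : y ⟶ y'),
      (F.map f ⊗ₘ F.map g) ≫ Fm x' y' = Fm x y ≫ F.map (f ⊗ₘ g))
    (hSF1 : ∀ x y z : C,
      (Fm x y ▷ F.obj z) ≫ Fm (x ⊗ y) z ≫ F.map (α_ x y z).hom =
        (α_ (F.obj x) (F.obj y) (F.obj z)).hom ≫ (F.obj x ◁ Fm y z) ≫ Fm x (y ⊗ z))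
    (F₁ : 𝟙_ G ⟶ F.obj (𝟙_ C)) (x : C) :
    (F.obj (𝟙_ C) ◁ ((F₁ ▷ F.obj x) ≫ Fm (𝟙_ C) x ≫ F.map (λ_ x).hom)) ≫ Fm (𝟙_ C) x =
      (α_ _ _ _).inv ≫
        (((F.obj (𝟙_ C) ◁ F₁) ≫ Fm (𝟙_ C) (𝟙_ C) ≫ F.map (λ_ (𝟙_ C)).hom) ▷ F.obj x) ≫
          Fm (𝟙_ C) x := by
  have sf1 : (F.obj (𝟙_ C) ◁ Fm (𝟙_ C) x) ≫ Fm (𝟙_ C) (𝟙_ C ⊗ x) =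
      (α_ _ _ _).inv ≫ (Fm (𝟙_ C) (𝟙_ C) ▷ F.obj x) ≫ Fm (𝟙_ C ⊗ 𝟙_ C) x ≫
        F.map (α_ (𝟙_ C) (𝟙_ C) x).hom := by
    rw [hSF1, Iso.inv_hom_id_assoc]
  have tri : F.map (α_ (𝟙_ C) (𝟙_ C) x).hom ≫ F.map (𝟙_ C ◁ (λ_ x).hom) =
      F.map ((λ_ (𝟙_ C)).hom ▷ x) := by
    rw [← F.map_comp, triangle, unitors_equal]
  calc _ = (F.obj (𝟙_ C) ◁ (F₁ ▷ F.obj x)) ≫ (F.obj (𝟙_ C) ◁ Fm (𝟙_ C) x) ≫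
        Fm (𝟙_ C) (𝟙_ C ⊗ x) ≫ F.map (𝟙_ C ◁ (λ_ x).hom) := by
        simp only [whiskerLeft_comp, Category.assoc, whiskerLeft_map_comp_of_nat hnat]
    _ = (F.obj (𝟙_ C) ◁ (F₁ ▷ F.obj x)) ≫ (α_ _ _ _).inv ≫
        (Fm (𝟙_ C) (𝟙_ C) ▷ F.obj x) ≫ (F.map (λ_ (𝟙_ C)).hom ▷ F.obj x) ≫ Fm (𝟙_ C) x := by
        rw [reassoc_of% sf1, tri, whiskerRight_map_comp_of_nat hnat]
    _ = _ := by simp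

lemma whiskerRight_rightUnit_comp
    (hnat : ∀ {x x' y y' : C} (f : x ⟶ x') (g : y ⟶ y'),
      (F.map f ⊗ₘ F.map g) ≫ Fm x' y' = Fm x y ≫ F.map (f ⊗ₘ g))
    (hSF1 : ∀ x y z : C,
      (Fm x y ▷ F.obj z) ≫ Fm (x ⊗ y) z ≫ F.map (α_ x y z).hom =
        (α_ (F.obj x) (F.obj y) (F.obj z)).hom ≫ (F.obj x ◁ Fm y z) ≫ Fm x (y ⊗ z))
    (F₁ : 𝟙_ G ⟶ F.obj (𝟙_ C)) (x : C) :
    (((F.obj x ◁ F₁) ≫ Fm x (𝟙_ C) ≫ F.map (ρ_ x).hom) ▷ F.obj (𝟙_ C)) ≫ Fm x (𝟙_ C) =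
      (α_ _ _ _).hom ≫
        (F.obj x ◁ ((F₁ ▷ F.obj (𝟙_ C)) ≫ Fm (𝟙_ C) (𝟙_ C) ≫ F.map (λ_ (𝟙_ C)).hom)) ≫
          Fm x (𝟙_ C) := by
  have sf1 : (Fm x (𝟙_ C) ▷ F.obj (𝟙_ C)) ≫ Fm (x ⊗ 𝟙_ C) (𝟙_ C) =
      (α_ _ _ _).hom ≫ (F.obj x ◁ Fm (𝟙_ C) (𝟙_ C)) ≫ Fm x (𝟙_ C ⊗ 𝟙_ C) ≫
        F.map (α_ x (𝟙_ C) (𝟙_ C)).inv := by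
    rw [← reassoc_of% (hSF1 x (𝟙_ C) (𝟙_ C)), ← F.map_comp, Iso.hom_inv_id, F.map_id,
      Category.comp_id]
  have tri : F.map (α_ x (𝟙_ C) (𝟙_ C)).inv ≫ F.map ((ρ_ x).hom ▷ 𝟙_ C) =
      F.map (x ◁ (λ_ (𝟙_ C)).hom) := by
    rw [← F.map_comp, ← triangle, Iso.inv_hom_id_assoc]
  calc _ = ((F.obj x ◁ F₁) ▷ F.obj (𝟙_ C)) ≫ (Fm x (𝟙_ C) ▷ F.obj (𝟙_ C)) ≫
        Fm (x ⊗ 𝟙_ C) (𝟙_ C) ≫ F.map ((ρ_ x).hom ▷ 𝟙_ C) := by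
        simp only [comp_whiskerRight, Category.assoc, whiskerRight_map_comp_of_nat hnat]
    _ = ((F.obj x ◁ F₁) ▷ F.obj (𝟙_ C)) ≫ (α_ _ _ _).hom ≫
        (F.obj x ◁ Fm (𝟙_ C) (𝟙_ C)) ≫ (F.obj x ◁ F.map (λ_ (𝟙_ C)).hom) ≫ Fm x (𝟙_ C) := by
        rw [reassoc_of% sf1, tri, whiskerLeft_map_comp_of_nat hnat]
    _ = _ := by simp

end UnitAxioms

theorem stmt3_general {C G : Type*} [Category C] [MonoidalCategory C]
    [Groupoid G] [MonoidalCategory G]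
    (F : C ⥤ G) (Fm : ∀ x y : C, F.obj x ⊗ F.obj y ⟶ F.obj (x ⊗ y))
    (hnat : ∀ {x x' y y' : C} (f : x ⟶ x') (g : y ⟶ y'),
      (F.map f ⊗ₘ F.map g) ≫ Fm x' y' = Fm x y ≫ F.map (f ⊗ₘ g))
    (hSF1 : ∀ x y z : C,
      (Fm x y ▷ F.obj z) ≫ Fm (x ⊗ y) z ≫ F.map (α_ x y z).hom =
        (α_ (F.obj x) (F.obj y) (F.obj z)).hom ≫ (F.obj x ◁ Fm y z) ≫ Fm x (y ⊗ z))
    (F₁ : 𝟙_ G ⟶ F.obj (𝟙_ C)) :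
    ((∀ x : C, (F₁ ▷ F.obj x) ≫ Fm (𝟙_ C) x ≫ F.map (λ_ x).hom = (λ_ (F.obj x)).hom) ∧
     (∀ x : C, (F.obj x ◁ F₁) ≫ Fm x (𝟙_ C) ≫ F.map (ρ_ x).hom = (ρ_ (F.obj x)).hom)) ↔
    (F.obj (𝟙_ C) ◁ F₁) ≫ Fm (𝟙_ C) (𝟙_ C) ≫ F.map (λ_ (𝟙_ C)).hom =
      (ρ_ (F.obj (𝟙_ C))).hom := by
  constructor
  · rintro ⟨-, hright⟩
    simpa only [unitors_equal] using hright (𝟙_ C)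
  · intro hsq
    have hleft : ∀ x : C,
        (F₁ ▷ F.obj x) ≫ Fm (𝟙_ C) x ≫ F.map (λ_ x).hom = (λ_ (F.obj x)).hom := fun x =>
      whiskerLeft_injective_of_isIso F₁ <| (cancel_mono (Fm (𝟙_ C) x)).1 <| by
        rw [whiskerLeft_leftUnit_comp hnat hSF1, hsq, ← triangle, Category.assoc,
          Iso.inv_hom_id_assoc]
    refine ⟨hleft, fun x => whiskerRight_injective_of_isIso F₁ <| (cancel_mono (Fm x (𝟙_ C))).1 ?_⟩
    rw [whiskerRight_rightUnit_comp hnat hSF1, hleft, ← triangle, Category.assoc]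

/-- Let `C` be a monoidal category, `G` a 2-group, and `(F, Fm)` satisfy (SF1).
An isomorphism `F₁ : 𝟙_ G ⟶ F.obj (𝟙_ C)` satisfies the two unit axioms (SF3) iff it
makes the single square `(id ⊗ F₁) ≫ Fm 1 1 ≫ F d = ρ'_{F1}` commute, where
`d = λ_ (𝟙_ C) = ρ_ (𝟙_ C)` is the basic unitor of `C`. -/
theorem stmt3 {C G : Type*} [Category C] [MonoidalCategory C]
    [Groupoid G] [MonoidalCategory G]
    (hinv : ∀ x : G, ∃ y : G, Nonempty (x ⊗ y ≅ 𝟙_ G) ∧ Nonempty (y ⊗ x ≅ 𝟙_ G))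
    (F : C ⥤ G) (Fm : ∀ x y : C, F.obj x ⊗ F.obj y ⟶ F.obj (x ⊗ y))
    (hiso : ∀ x y : C, IsIso (Fm x y))
    (hnat : ∀ {x x' y y' : C} (f : x ⟶ x') (g : y ⟶ y'),
      (F.map f ⊗ₘ F.map g) ≫ Fm x' y' = Fm x y ≫ F.map (f ⊗ₘ g))
    (hSF1 : ∀ x y z : C,
      (Fm x y ▷ F.obj z) ≫ Fm (x ⊗ y) z ≫ F.map (α_ x y z).hom =
        (α_ (F.obj x) (F.obj y) (F.obj z)).hom ≫ (F.obj x ◁ Fm y z) ≫ Fm x (y ⊗ z))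
    (F₁ : 𝟙_ G ⟶ F.obj (𝟙_ C)) (hF₁ : IsIso F₁) :
    ((∀ x : C, (F₁ ▷ F.obj x) ≫ Fm (𝟙_ C) x ≫ F.map (λ_ x).hom = (λ_ (F.obj x)).hom) ∧
     (∀ x : C, (F.obj x ◁ F₁) ≫ Fm x (𝟙_ C) ≫ F.map (ρ_ x).hom = (ρ_ (F.obj x)).hom)) ↔
    (F.obj (𝟙_ C) ◁ F₁) ≫ Fm (𝟙_ C) (𝟙_ C) ≫ F.map (λ_ (𝟙_ C)).hom =
      (ρ_ (F.obj (𝟙_ C))).hom :=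
  stmt3_general F Fm hnat hSF1 F₁
end

section
/- In any symmetric monoidal category, the canonical associo-commutators satisfy the 4×4 interchange axiom: for all objects x,y,z,t,x',y',z',t', the square formed by b(x⊕y, z⊕t, x'⊕y', z'⊕t'), b(x,y,x',y') ⊕ b(z,t,z',t'), b(x,y,z,t) ⊕ b(x',y',z',t'), b(x⊕z, y⊕t, x'⊕z', y'⊕t'), b(x⊕x', y⊕y', z⊕z', t⊕t'), and b(x,z,x',z') ⊕ b(y,t,y',t') commutes (the two composite paths from [(x⊕y)⊕(z⊕t)]⊕[(x'⊕y')⊕(z'⊕t')] to [(x⊕x')⊕(z⊕z')]⊕[(y⊕y')⊕(t⊕t')] are equal). -/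
/-!
The associo-commutator `b` is Mathlib's `tensorμ`, the structure map making the tensor product
`⊗ : C × C ⥤ C` a monoidal functor. In a symmetric category this functor is moreover braided:
compatibility of `tensorμ` with the braiding needs one extra crossing of two strands to be undone.
For any lax braided functor `F`, its structure map `μ` intertwines the interchange maps `tensorμ` of
source and target; for `F = ⊗` these are all associo-commutators, and that is the 4×4 axiom.
-/

open CategoryTheory MonoidalCategory

/-- The canonical associo-commutator `b(x,y,z,t) : (x⊕y)⊕(z⊕t) ⟶ (x⊕z)⊕(y⊕t)` of a
symmetric monoidal category, defined as the composite
`a⁻¹ ; (id ⊕ a) ; (id ⊕ (c ⊕ id)) ; (id ⊕ a⁻¹) ; a` (in the paper's conventions). -/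
noncomputable def ac {C : Type*} [Category C] [MonoidalCategory C] [BraidedCategory C]
    (x y z t : C) : (x ⊗ y) ⊗ (z ⊗ t) ⟶ (x ⊗ z) ⊗ (y ⊗ t) :=
  (α_ x y (z ⊗ t)).hom ≫ (x ◁ (α_ y z t).inv) ≫ (x ◁ ((β_ y z).hom ▷ t)) ≫
    (x ◁ (α_ z y t).hom) ≫ (α_ x z (y ⊗ t)).inv

theorem ac_eq_tensorμ {C : Type*} [Category C] [MonoidalCategory C] [BraidedCategory C]
    (x y z t : C) : ac x y z t = tensorμ x y z t :=
  rfl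

namespace CategoryTheory

instance prodBraided (C₁ C₂ : Type*) [Category C₁] [MonoidalCategory C₁] [BraidedCategory C₁]
    [Category C₂] [MonoidalCategory C₂] [BraidedCategory C₂] : BraidedCategory (C₁ × C₂) where
  braiding X Y := (β_ X.1 Y.1).prod (β_ X.2 Y.2)

variable {C : Type*} [Category C] [MonoidalCategory C] [SymmetricCategory C]

theorem tensorμ_comp_tensorHom_braiding (X₁ X₂ Y₁ Y₂ : C) :
    tensorμ X₁ X₂ Y₁ Y₂ ≫ ((β_ X₁ Y₁).hom ⊗ₘ (β_ X₂ Y₂).hom) =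
      (β_ (X₁ ⊗ X₂) (Y₁ ⊗ Y₂)).hom ≫ tensorμ Y₁ Y₂ X₁ X₂ := by
  simp only [tensorμ, BraidedCategory.braiding_tensor_left_hom,
    BraidedCategory.braiding_tensor_right_hom]
  calc
    _ = 𝟙 _ ⊗≫ X₁ ◁ (β_ X₂ Y₁).hom ▷ Y₂ ⊗≫ (β_ X₁ Y₁).hom ▷ X₂ ▷ Y₂ ⊗≫
          Y₁ ◁ X₁ ◁ (β_ X₂ Y₂).hom ⊗≫ 𝟙 _ := by
      rw [MonoidalCategory.tensorHom_def]; monoidal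
    _ = 𝟙 _ ⊗≫ X₁ ◁ (β_ X₂ Y₁).hom ▷ Y₂ ⊗≫ (β_ X₁ Y₁).hom ▷ X₂ ▷ Y₂ ⊗≫
          Y₁ ◁ X₁ ◁ (β_ X₂ Y₂).hom ⊗≫ Y₁ ◁ ((β_ X₁ Y₂).hom ≫ (β_ Y₂ X₁).hom) ▷ X₂ ⊗≫ 𝟙 _ := by
      rw [SymmetricCategory.symmetry]; monoidal
    _ = _ := by monoidal

instance tensorLaxBraided : (tensor C).LaxBraided where
  braided X Y := tensorμ_comp_tensorHom_braiding X.1 X.2 Y.1 Y.2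

theorem tensorμ_interchange (X₁ X₂ Y₁ Y₂ Z₁ Z₂ W₁ W₂ : C) :
    tensorμ (X₁ ⊗ X₂) (Y₁ ⊗ Y₂) (Z₁ ⊗ Z₂) (W₁ ⊗ W₂) ≫
        (tensorμ X₁ X₂ Z₁ Z₂ ⊗ₘ tensorμ Y₁ Y₂ W₁ W₂) ≫
        tensorμ (X₁ ⊗ Z₁) (X₂ ⊗ Z₂) (Y₁ ⊗ W₁) (Y₂ ⊗ W₂) =
      (tensorμ X₁ X₂ Y₁ Y₂ ⊗ₘ tensorμ Z₁ Z₂ W₁ W₂) ≫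
        tensorμ (X₁ ⊗ Y₁) (X₂ ⊗ Y₂) (Z₁ ⊗ W₁) (Z₂ ⊗ W₂) ≫
        (tensorμ X₁ Y₁ Z₁ W₁ ⊗ₘ tensorμ X₂ Y₂ Z₂ W₂) :=
  tensorμ_comp_μ_tensorHom_μ_comp_μ (tensor C) (X₁, X₂) (Y₁, Y₂) (Z₁, Z₂) (W₁, W₂)

end CategoryTheory

/-- The 4×4 interchange axiom for the canonical associo-commutators. -/
theorem stmt8 {C : Type*} [Category C] [MonoidalCategory C] [SymmetricCategory C]
    (x y z t x' y' z' t' : C) :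
    ac (x ⊗ y) (z ⊗ t) (x' ⊗ y') (z' ⊗ t') ≫
        (ac x y x' y' ⊗ₘ ac z t z' t') ≫
        ac (x ⊗ x') (y ⊗ y') (z ⊗ z') (t ⊗ t') =
      (ac x y z t ⊗ₘ ac x' y' z' t') ≫
        ac (x ⊗ z) (y ⊗ t) (x' ⊗ z') (y' ⊗ t') ≫
        (ac x z x' z' ⊗ₘ ac y t y' t') := by
  simp only [ac_eq_tensorμ]
  exact tensorμ_interchange x y z t x' y' z' t'
end

section
/- Let G, G' be symmetric monoidal categories and let F, F' : G → G' be symmetric monoidal functors. Define (F ⊞ F')(x) := Fx ⊕' F'x on objects and (F ⊞ F')(f) := Ff ⊕' F'f on morphisms, with structure isomorphism (F⊞F')_⊕(x,y) := (F_⊕(x,y) ⊕' F'_⊕(x,y)) ∘ b'(Fx, F'x, Fy, F'y), where b' is the canonical associo-commutator of G', and zero isomorphism (F⊞F')_0 := (F_0 ⊕' F'_0) ∘ d', where d' = l'_0 = r'_0. Then F ⊞ F' is a symmetric monoidal functor. -/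
/-!
`F ⊞ F'` is the composite of `F.prod' F' : G ⥤ G' × G'` with the tensor product
`G' × G' ⥤ G'`, and the associo-commutator is exactly `tensorμ`, the structure morphism making
the tensor product a monoidal functor. Each axiom for `F ⊞ F'` is therefore the tensor product
of the axioms for `F` and `F'`, transported along the matching coherence property of `tensorμ`:
naturality, `tensor_associativity`, `tensor_left_unitality`/`tensor_right_unitality`, and, for
(SF2), compatibility of `tensorμ` with the braiding, which holds because `G'` is symmetric.
-/

open CategoryTheory MonoidalCategory

namespace CategoryTheory

instance MonoidalCategory.isIso_tensorμ {C : Type*} [Category C] [MonoidalCategory C]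
    [BraidedCategory C] (X₁ X₂ Y₁ Y₂ : C) : IsIso (tensorμ X₁ X₂ Y₁ Y₂) :=
  ⟨tensorδ X₁ X₂ Y₁ Y₂, tensorμ_tensorδ X₁ X₂ Y₁ Y₂, tensorδ_tensorμ X₁ X₂ Y₁ Y₂⟩

theorem SymmetricCategory.tensorμ_braiding {C : Type*} [Category C] [MonoidalCategory C]
    [SymmetricCategory C] (X₁ X₂ Y₁ Y₂ : C) :
    tensorμ X₁ X₂ Y₁ Y₂ ≫ ((β_ X₁ Y₁).hom ⊗ₘ (β_ X₂ Y₂).hom) =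
      (β_ (X₁ ⊗ X₂) (Y₁ ⊗ Y₂)).hom ≫ tensorμ Y₁ Y₂ X₁ X₂ := by
  simp [tensorμ, SymmetricCategory.braiding_swap_eq_inv_braiding Y₁ X₂,
    SymmetricCategory.braiding_swap_eq_inv_braiding X₁ Y₂, MonoidalCategory.tensorHom_def]

namespace Functor

variable {G C : Type*} [Category G] [MonoidalCategory G] [Category C] [MonoidalCategory C]
  {F F' : G ⥤ C} (Fm : ∀ x y : G, F.obj x ⊗ F.obj y ⟶ F.obj (x ⊗ y))
  (F'm : ∀ x y : G, F'.obj x ⊗ F'.obj y ⟶ F'.obj (x ⊗ y))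

/-- The paper's `(F ⊞ F')_⊕(x, y)`. -/
def sumμ [BraidedCategory C] (x y : G) :
    (F.obj x ⊗ F'.obj x) ⊗ (F.obj y ⊗ F'.obj y) ⟶ F.obj (x ⊗ y) ⊗ F'.obj (x ⊗ y) :=
  tensorμ _ _ _ _ ≫ (Fm x y ⊗ₘ F'm x y)

instance isIso_sumμ [BraidedCategory C] (x y : G) [IsIso (Fm x y)] [IsIso (F'm x y)] :
    IsIso (sumμ Fm F'm x y) := by
  unfold sumμ
  infer_instance

variable {Fm F'm}

lemma sumμ_natural [BraidedCategory C] {x x' y y' : G} (f : x ⟶ x') (g : y ⟶ y')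
    (hF : (F.map f ⊗ₘ F.map g) ≫ Fm x' y' = Fm x y ≫ F.map (f ⊗ₘ g))
    (hF' : (F'.map f ⊗ₘ F'.map g) ≫ F'm x' y' = F'm x y ≫ F'.map (f ⊗ₘ g)) :
    ((F.map f ⊗ₘ F'.map f) ⊗ₘ (F.map g ⊗ₘ F'.map g)) ≫ sumμ Fm F'm x' y' =
      sumμ Fm F'm x y ≫ (F.map (f ⊗ₘ g) ⊗ₘ F'.map (f ⊗ₘ g)) := by
  rw [sumμ, sumμ, tensorμ_natural_assoc, Category.assoc, tensorHom_comp_tensorHom,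
    tensorHom_comp_tensorHom, hF, hF']

lemma sumμ_associativity [BraidedCategory C] (x y z : G)
    (hF : Fm x y ▷ F.obj z ≫ Fm (x ⊗ y) z ≫ F.map (α_ x y z).hom =
      (α_ (F.obj x) (F.obj y) (F.obj z)).hom ≫ F.obj x ◁ Fm y z ≫ Fm x (y ⊗ z))
    (hF' : F'm x y ▷ F'.obj z ≫ F'm (x ⊗ y) z ≫ F'.map (α_ x y z).hom =
      (α_ (F'.obj x) (F'.obj y) (F'.obj z)).hom ≫ F'.obj x ◁ F'm y z ≫ F'm x (y ⊗ z)) :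
    sumμ Fm F'm x y ▷ (F.obj z ⊗ F'.obj z) ≫ sumμ Fm F'm (x ⊗ y) z ≫
        (F.map (α_ x y z).hom ⊗ₘ F'.map (α_ x y z).hom) =
      (α_ (F.obj x ⊗ F'.obj x) (F.obj y ⊗ F'.obj y) (F.obj z ⊗ F'.obj z)).hom ≫
        (F.obj x ⊗ F'.obj x) ◁ sumμ Fm F'm y z ≫ sumμ Fm F'm x (y ⊗ z) := by
  calc
    _ = tensorμ _ _ _ _ ▷ (F.obj z ⊗ F'.obj z) ≫ tensorμ _ _ (F.obj z) (F'.obj z) ≫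
          ((Fm x y ▷ F.obj z ≫ Fm (x ⊗ y) z ≫ F.map (α_ x y z).hom) ⊗ₘ
            (F'm x y ▷ F'.obj z ≫ F'm (x ⊗ y) z ≫ F'.map (α_ x y z).hom)) := by
      simp only [sumμ, comp_whiskerRight, Category.assoc, tensorμ_natural_left_assoc,
        tensorHom_comp_tensorHom]
    _ = (tensorμ _ _ _ _ ▷ (F.obj z ⊗ F'.obj z) ≫ tensorμ _ _ (F.obj z) (F'.obj z) ≫
          ((α_ (F.obj x) (F.obj y) (F.obj z)).hom ⊗ₘ (α_ (F'.obj x) (F'.obj y) (F'.obj z)).hom)) ≫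
          ((F.obj x ◁ Fm y z ≫ Fm x (y ⊗ z)) ⊗ₘ (F'.obj x ◁ F'm y z ≫ F'm x (y ⊗ z))) := by
      rw [hF, hF', ← tensorHom_comp_tensorHom]
      simp only [Category.assoc]
    _ = _ := by
      rw [tensor_associativity]
      simp only [sumμ, Category.assoc, MonoidalCategory.whiskerLeft_comp,
        tensorμ_natural_right_assoc, tensorHom_comp_tensorHom]

lemma sumμ_braiding [BraidedCategory G] [SymmetricCategory C] (x y : G)
    (hF : Fm x y ≫ F.map (β_ x y).hom = (β_ (F.obj x) (F.obj y)).hom ≫ Fm y x)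
    (hF' : F'm x y ≫ F'.map (β_ x y).hom = (β_ (F'.obj x) (F'.obj y)).hom ≫ F'm y x) :
    sumμ Fm F'm x y ≫ (F.map (β_ x y).hom ⊗ₘ F'.map (β_ x y).hom) =
      (β_ (F.obj x ⊗ F'.obj x) (F.obj y ⊗ F'.obj y)).hom ≫ sumμ Fm F'm y x := by
  rw [sumμ, sumμ, Category.assoc, tensorHom_comp_tensorHom, hF, hF', ← tensorHom_comp_tensorHom,
    ← Category.assoc, SymmetricCategory.tensorμ_braiding, Category.assoc]

lemma sumμ_left_unitality [BraidedCategory C] {F₀ : 𝟙_ C ⟶ F.obj (𝟙_ G)}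
    {F'₀ : 𝟙_ C ⟶ F'.obj (𝟙_ G)} (x : G)
    (hF : F₀ ▷ F.obj x ≫ Fm (𝟙_ G) x ≫ F.map (λ_ x).hom = (λ_ (F.obj x)).hom)
    (hF' : F'₀ ▷ F'.obj x ≫ F'm (𝟙_ G) x ≫ F'.map (λ_ x).hom = (λ_ (F'.obj x)).hom) :
    ((λ_ (𝟙_ C)).inv ≫ (F₀ ⊗ₘ F'₀)) ▷ (F.obj x ⊗ F'.obj x) ≫ sumμ Fm F'm (𝟙_ G) x ≫
        (F.map (λ_ x).hom ⊗ₘ F'.map (λ_ x).hom) =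
      (λ_ (F.obj x ⊗ F'.obj x)).hom := by
  rw [tensor_left_unitality, ← hF, ← hF', ← tensorHom_comp_tensorHom, ← tensorHom_comp_tensorHom]
  simp only [sumμ, comp_whiskerRight, Category.assoc, tensorμ_natural_left_assoc,
    tensorHom_comp_tensorHom]

lemma sumμ_right_unitality [BraidedCategory C] {F₀ : 𝟙_ C ⟶ F.obj (𝟙_ G)}
    {F'₀ : 𝟙_ C ⟶ F'.obj (𝟙_ G)} (x : G)
    (hF : F.obj x ◁ F₀ ≫ Fm x (𝟙_ G) ≫ F.map (ρ_ x).hom = (ρ_ (F.obj x)).hom)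
    (hF' : F'.obj x ◁ F'₀ ≫ F'm x (𝟙_ G) ≫ F'.map (ρ_ x).hom = (ρ_ (F'.obj x)).hom) :
    (F.obj x ⊗ F'.obj x) ◁ ((λ_ (𝟙_ C)).inv ≫ (F₀ ⊗ₘ F'₀)) ≫ sumμ Fm F'm x (𝟙_ G) ≫
        (F.map (ρ_ x).hom ⊗ₘ F'.map (ρ_ x).hom) =
      (ρ_ (F.obj x ⊗ F'.obj x)).hom := by
  rw [tensor_right_unitality, ← hF, ← hF', ← tensorHom_comp_tensorHom, ← tensorHom_comp_tensorHom]
  simp only [sumμ, MonoidalCategory.whiskerLeft_comp, Category.assoc, tensorμ_natural_right_assoc,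
    tensorHom_comp_tensorHom]

end Functor

end CategoryTheory

theorem stmt12_general {G G' : Type*}
    [Category G] [MonoidalCategory G] [SymmetricCategory G]
    [Category G'] [MonoidalCategory G'] [SymmetricCategory G']
    (F F' : G ⥤ G')
    (Fm : ∀ x y : G, F.obj x ⊗ F.obj y ⟶ F.obj (x ⊗ y))
    (F'm : ∀ x y : G, F'.obj x ⊗ F'.obj y ⟶ F'.obj (x ⊗ y))
    (F₀ : 𝟙_ G' ⟶ F.obj (𝟙_ G)) (F'₀ : 𝟙_ G' ⟶ F'.obj (𝟙_ G))
    (hFiso : ∀ x y, IsIso (Fm x y)) (hF'iso : ∀ x y, IsIso (F'm x y))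
    (hF₀iso : IsIso F₀) (hF'₀iso : IsIso F'₀)
    (hFnat : ∀ {x x' y y' : G} (f : x ⟶ x') (g : y ⟶ y'),
      (F.map f ⊗ₘ F.map g) ≫ Fm x' y' = Fm x y ≫ F.map (f ⊗ₘ g))
    (hF'nat : ∀ {x x' y y' : G} (f : x ⟶ x') (g : y ⟶ y'),
      (F'.map f ⊗ₘ F'.map g) ≫ F'm x' y' = F'm x y ≫ F'.map (f ⊗ₘ g))
    (hFSF1 : ∀ x y z : G,
      (Fm x y ▷ F.obj z) ≫ Fm (x ⊗ y) z ≫ F.map (α_ x y z).hom =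
        (α_ (F.obj x) (F.obj y) (F.obj z)).hom ≫ (F.obj x ◁ Fm y z) ≫ Fm x (y ⊗ z))
    (hF'SF1 : ∀ x y z : G,
      (F'm x y ▷ F'.obj z) ≫ F'm (x ⊗ y) z ≫ F'.map (α_ x y z).hom =
        (α_ (F'.obj x) (F'.obj y) (F'.obj z)).hom ≫ (F'.obj x ◁ F'm y z) ≫ F'm x (y ⊗ z))
    (hFSF2 : ∀ x y : G,
      Fm x y ≫ F.map (β_ x y).hom = (β_ (F.obj x) (F.obj y)).hom ≫ Fm y x)
    (hF'SF2 : ∀ x y : G,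
      F'm x y ≫ F'.map (β_ x y).hom = (β_ (F'.obj x) (F'.obj y)).hom ≫ F'm y x)
    (hFSF3l : ∀ x : G,
      (F₀ ▷ F.obj x) ≫ Fm (𝟙_ G) x ≫ F.map (λ_ x).hom = (λ_ (F.obj x)).hom)
    (hF'SF3l : ∀ x : G,
      (F'₀ ▷ F'.obj x) ≫ F'm (𝟙_ G) x ≫ F'.map (λ_ x).hom = (λ_ (F'.obj x)).hom)
    (hFSF3r : ∀ x : G,
      (F.obj x ◁ F₀) ≫ Fm x (𝟙_ G) ≫ F.map (ρ_ x).hom = (ρ_ (F.obj x)).hom)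
    (hF'SF3r : ∀ x : G,
      (F'.obj x ◁ F'₀) ≫ F'm x (𝟙_ G) ≫ F'.map (ρ_ x).hom = (ρ_ (F'.obj x)).hom)
    -- data of `F ⊞ F'`:
    (Hmap : ∀ {x y : G}, (x ⟶ y) → (F.obj x ⊗ F'.obj x ⟶ F.obj y ⊗ F'.obj y))
    (hHmap : ∀ {x y : G} (f : x ⟶ y), Hmap f = (F.map f ⊗ₘ F'.map f))
    (Hm : ∀ x y : G,
      (F.obj x ⊗ F'.obj x) ⊗ (F.obj y ⊗ F'.obj y) ⟶ F.obj (x ⊗ y) ⊗ F'.obj (x ⊗ y))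
    (hHm : ∀ x y : G,
      Hm x y = ac (F.obj x) (F'.obj x) (F.obj y) (F'.obj y) ≫ (Fm x y ⊗ₘ F'm x y))
    (H₀ : 𝟙_ G' ⟶ F.obj (𝟙_ G) ⊗ F'.obj (𝟙_ G))
    (hH₀ : H₀ = (λ_ (𝟙_ G')).inv ≫ (F₀ ⊗ₘ F'₀)) :
    -- `F ⊞ F'` is a symmetric monoidal functor:
    (∀ x : G, Hmap (𝟙 x) = 𝟙 (F.obj x ⊗ F'.obj x)) ∧
    (∀ {x y z : G} (f : x ⟶ y) (g : y ⟶ z), Hmap (f ≫ g) = Hmap f ≫ Hmap g) ∧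
    (∀ x y, IsIso (Hm x y)) ∧ IsIso H₀ ∧
    (∀ {x x' y y' : G} (f : x ⟶ x') (g : y ⟶ y'),
      (Hmap f ⊗ₘ Hmap g) ≫ Hm x' y' = Hm x y ≫ Hmap (f ⊗ₘ g)) ∧
    (∀ x y z : G,
      (Hm x y ▷ (F.obj z ⊗ F'.obj z)) ≫ Hm (x ⊗ y) z ≫ Hmap (α_ x y z).hom =
        (α_ (F.obj x ⊗ F'.obj x) (F.obj y ⊗ F'.obj y) (F.obj z ⊗ F'.obj z)).hom ≫
          ((F.obj x ⊗ F'.obj x) ◁ Hm y z) ≫ Hm x (y ⊗ z)) ∧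
    (∀ x y : G,
      Hm x y ≫ Hmap (β_ x y).hom =
        (β_ (F.obj x ⊗ F'.obj x) (F.obj y ⊗ F'.obj y)).hom ≫ Hm y x) ∧
    (∀ x : G,
      (H₀ ▷ (F.obj x ⊗ F'.obj x)) ≫ Hm (𝟙_ G) x ≫ Hmap (λ_ x).hom =
        (λ_ (F.obj x ⊗ F'.obj x)).hom) ∧
    (∀ x : G,
      ((F.obj x ⊗ F'.obj x) ◁ H₀) ≫ Hm x (𝟙_ G) ≫ Hmap (ρ_ x).hom =
        (ρ_ (F.obj x ⊗ F'.obj x)).hom) := by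
  obtain rfl : @Hmap = fun _ _ f ↦ F.map f ⊗ₘ F'.map f := by
    funext x y f
    exact hHmap f
  -- `ac` is definitionally `tensorμ`
  obtain rfl : Hm = Functor.sumμ Fm F'm := funext₂ hHm
  subst hH₀
  refine ⟨fun x ↦ by simp, fun f g ↦ by simp, fun x y ↦ inferInstance, inferInstance,
    fun f g ↦ Functor.sumμ_natural f g (hFnat f g) (hF'nat f g),
    fun x y z ↦ Functor.sumμ_associativity x y z (hFSF1 x y z) (hF'SF1 x y z),
    fun x y ↦ Functor.sumμ_braiding x y (hFSF2 x y) (hF'SF2 x y),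
    fun x ↦ Functor.sumμ_left_unitality x (hFSF3l x) (hF'SF3l x),
    fun x ↦ Functor.sumμ_right_unitality x (hFSF3r x) (hF'SF3r x)⟩

/-- The pointwise sum `F ⊞ F'` of two symmetric monoidal functors `F, F' : G ⥤ G'`,
with `(F ⊞ F')(x) = Fx ⊕' F'x`, `(F ⊞ F')(f) = Ff ⊕' F'f`, structure isomorphisms
`(F⊞F')_⊕(x,y) = b'(Fx,F'x,Fy,F'y) ≫ (F_⊕(x,y) ⊕' F'_⊕(x,y))` (where `b'` is the
canonical associo-commutator of `G'`) and zero isomorphism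
`(F⊞F')_0 = d'⁻¹-direction morphism (λ_ 0')⁻¹ ≫ (F_0 ⊕' F'_0)`, is again a symmetric
monoidal functor: it is functorial and satisfies naturality and (SF1)-(SF3). -/
theorem stmt12 {G G' : Type*}
    [Category G] [MonoidalCategory G] [SymmetricCategory G]
    [Category G'] [MonoidalCategory G'] [SymmetricCategory G']
    (F F' : G ⥤ G')
    (Fm : ∀ x y : G, F.obj x ⊗ F.obj y ⟶ F.obj (x ⊗ y))
    (F'm : ∀ x y : G, F'.obj x ⊗ F'.obj y ⟶ F'.obj (x ⊗ y))
    (F₀ : 𝟙_ G' ⟶ F.obj (𝟙_ G)) (F'₀ : 𝟙_ G' ⟶ F'.obj (𝟙_ G))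
    (hFiso : ∀ x y, IsIso (Fm x y)) (hF'iso : ∀ x y, IsIso (F'm x y))
    (hF₀iso : IsIso F₀) (hF'₀iso : IsIso F'₀)
    (hFnat : ∀ {x x' y y' : G} (f : x ⟶ x') (g : y ⟶ y'),
      (F.map f ⊗ₘ F.map g) ≫ Fm x' y' = Fm x y ≫ F.map (f ⊗ₘ g))
    (hF'nat : ∀ {x x' y y' : G} (f : x ⟶ x') (g : y ⟶ y'),
      (F'.map f ⊗ₘ F'.map g) ≫ F'm x' y' = F'm x y ≫ F'.map (f ⊗ₘ g))
    (hFSF1 : ∀ x y z : G,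
      (Fm x y ▷ F.obj z) ≫ Fm (x ⊗ y) z ≫ F.map (α_ x y z).hom =
        (α_ (F.obj x) (F.obj y) (F.obj z)).hom ≫ (F.obj x ◁ Fm y z) ≫ Fm x (y ⊗ z))
    (hF'SF1 : ∀ x y z : G,
      (F'm x y ▷ F'.obj z) ≫ F'm (x ⊗ y) z ≫ F'.map (α_ x y z).hom =
        (α_ (F'.obj x) (F'.obj y) (F'.obj z)).hom ≫ (F'.obj x ◁ F'm y z) ≫ F'm x (y ⊗ z))
    (hFSF2 : ∀ x y : G,
      Fm x y ≫ F.map (β_ x y).hom = (β_ (F.obj x) (F.obj y)).hom ≫ Fm y x)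
    (hF'SF2 : ∀ x y : G,
      F'm x y ≫ F'.map (β_ x y).hom = (β_ (F'.obj x) (F'.obj y)).hom ≫ F'm y x)
    (hFSF3l : ∀ x : G,
      (F₀ ▷ F.obj x) ≫ Fm (𝟙_ G) x ≫ F.map (λ_ x).hom = (λ_ (F.obj x)).hom)
    (hF'SF3l : ∀ x : G,
      (F'₀ ▷ F'.obj x) ≫ F'm (𝟙_ G) x ≫ F'.map (λ_ x).hom = (λ_ (F'.obj x)).hom)
    (hFSF3r : ∀ x : G,
      (F.obj x ◁ F₀) ≫ Fm x (𝟙_ G) ≫ F.map (ρ_ x).hom = (ρ_ (F.obj x)).hom)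
    (hF'SF3r : ∀ x : G,
      (F'.obj x ◁ F'₀) ≫ F'm x (𝟙_ G) ≫ F'.map (ρ_ x).hom = (ρ_ (F'.obj x)).hom)
    -- data of `F ⊞ F'`:
    (Hobj : G → G') (hHobj : ∀ x, Hobj x = F.obj x ⊗ F'.obj x)
    (Hmap : ∀ {x y : G}, (x ⟶ y) → (F.obj x ⊗ F'.obj x ⟶ F.obj y ⊗ F'.obj y))
    (hHmap : ∀ {x y : G} (f : x ⟶ y), Hmap f = (F.map f ⊗ₘ F'.map f))
    (Hm : ∀ x y : G,
      (F.obj x ⊗ F'.obj x) ⊗ (F.obj y ⊗ F'.obj y) ⟶ F.obj (x ⊗ y) ⊗ F'.obj (x ⊗ y))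
    (hHm : ∀ x y : G,
      Hm x y = ac (F.obj x) (F'.obj x) (F.obj y) (F'.obj y) ≫ (Fm x y ⊗ₘ F'm x y))
    (H₀ : 𝟙_ G' ⟶ F.obj (𝟙_ G) ⊗ F'.obj (𝟙_ G))
    (hH₀ : H₀ = (λ_ (𝟙_ G')).inv ≫ (F₀ ⊗ₘ F'₀)) :
    -- `F ⊞ F'` is a symmetric monoidal functor:
    (∀ x : G, Hmap (𝟙 x) = 𝟙 (F.obj x ⊗ F'.obj x)) ∧
    (∀ {x y z : G} (f : x ⟶ y) (g : y ⟶ z), Hmap (f ≫ g) = Hmap f ≫ Hmap g) ∧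
    (∀ x y, IsIso (Hm x y)) ∧ IsIso H₀ ∧
    (∀ {x x' y y' : G} (f : x ⟶ x') (g : y ⟶ y'),
      (Hmap f ⊗ₘ Hmap g) ≫ Hm x' y' = Hm x y ≫ Hmap (f ⊗ₘ g)) ∧
    (∀ x y z : G,
      (Hm x y ▷ (F.obj z ⊗ F'.obj z)) ≫ Hm (x ⊗ y) z ≫ Hmap (α_ x y z).hom =
        (α_ (F.obj x ⊗ F'.obj x) (F.obj y ⊗ F'.obj y) (F.obj z ⊗ F'.obj z)).hom ≫
          ((F.obj x ⊗ F'.obj x) ◁ Hm y z) ≫ Hm x (y ⊗ z)) ∧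
    (∀ x y : G,
      Hm x y ≫ Hmap (β_ x y).hom =
        (β_ (F.obj x ⊗ F'.obj x) (F.obj y ⊗ F'.obj y)).hom ≫ Hm y x) ∧
    (∀ x : G,
      (H₀ ▷ (F.obj x ⊗ F'.obj x)) ≫ Hm (𝟙_ G) x ≫ Hmap (λ_ x).hom =
        (λ_ (F.obj x ⊗ F'.obj x)).hom) ∧
    (∀ x : G,
      ((F.obj x ⊗ F'.obj x) ◁ H₀) ≫ Hm x (𝟙_ G) ≫ Hmap (ρ_ x).hom =
        (ρ_ (F.obj x ⊗ F'.obj x)).hom) :=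
  stmt12_general F F' Fm F'm F₀ F'₀ hFiso hF'iso hF₀iso hF'₀iso hFnat hF'nat hFSF1 hF'SF1 hFSF2
    hF'SF2 hFSF3l hF'SF3l hFSF3r hF'SF3r Hmap hHmap Hm hHm H₀ hH₀
end

section
/- With G the strict symmetric 2-group of dual integers and (F(a,b), F(a,b)_⊕) as above with b ≠ 0, the pair does NOT satisfy the monoidal functor associativity axiom (SF1): there exist objects for which the hexagon fails. Concretely, (SF1) for this pair is equivalent to b(x − x') = 0 for all integers x, x', which fails when b ≠ 0. -/
open CategoryTheory

/-- Elements `x + y·ε` of the ring `ℤ[ε]/(ε²)` of dual integers, encoded as pairs. -/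
def Dual : Type := ℤ × ℤ

instance : AddCommGroup Dual := inferInstanceAs (AddCommGroup (ℤ × ℤ))

/-- First component (`x` in `x + yε`). -/
def Dual.x (u : Dual) : ℤ := (show ℤ × ℤ from u).1

/-- Second component (`y` in `x + yε`). -/
def Dual.y (u : Dual) : ℤ := (show ℤ × ℤ from u).2

/-- The groupoid of dual integers: morphisms `u ⟶ v` are pairs `(n, u)` with `n : ℤ`,
existing only when `u = v`; composition adds the integer components. -/
instance : Groupoid Dual where
  Hom u v := { _n : ℤ // u = v }
  id _ := ⟨0, rfl⟩
  comp f g := ⟨f.1 + g.1, f.2.trans g.2⟩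
  id_comp _ := Subtype.ext (zero_add _)
  comp_id _ := Subtype.ext (add_zero _)
  assoc _ _ _ := Subtype.ext (add_assoc _ _ _)
  inv f := ⟨-f.1, f.2.symm⟩
  inv_comp f := Subtype.ext (by simp)
  comp_inv f := Subtype.ext (by simp)

/-- The integer component of a morphism of `Dual`. -/
def homVal {u v : Dual} (f : u ⟶ v) : ℤ := (show { _n : ℤ // u = v } from f).1

/-- The underlying object equality of a morphism of `Dual`. -/
def homEq {u v : Dual} (f : u ⟶ v) : u = v := (show { _n : ℤ // u = v } from f).2

/-- Construct a morphism of `Dual` from an integer and an object equality. -/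
def homMk {u v : Dual} (n : ℤ) (h : u = v) : u ⟶ v := show { _n : ℤ // u = v } from ⟨n, h⟩

/-- The (strict) tensor product of morphisms: componentwise addition. -/
def tHom {u v w s : Dual} (f : u ⟶ v) (g : w ⟶ s) : u + w ⟶ v + s :=
  homMk (homVal f + homVal g) (by rw [homEq f, homEq g])

/-- Multiplication by `a + b·ε`: `(a+bε)·(x+yε) = ax + (ay+bx)ε`. -/
def rmul (a b : ℤ) (u : Dual) : Dual := show ℤ × ℤ from (a * u.x, a * u.y + b * u.x)

/-- Object part of the functor `F(a,b)`: multiplication by `a + b·ε`. -/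
def Fobj (a b : ℤ) (u : Dual) : Dual := rmul a b u

/-- Morphism part of the functor `F(a,b)`: `(n, u) ↦ (a·n, (a+bε)·u)`. -/
def Fmap (a b : ℤ) {u v : Dual} (f : u ⟶ v) : Fobj a b u ⟶ Fobj a b v :=
  homMk (a * homVal f) (by rw [homEq f])

lemma Fobj_add (a b : ℤ) (u v : Dual) : Fobj a b u + Fobj a b v = Fobj a b (u + v) := by
  show ((a * u.x, a * u.y + b * u.x) : ℤ × ℤ) + (a * v.x, a * v.y + b * v.x)
      = (a * (u + v).x, a * (u + v).y + b * (u + v).x)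
  have hx : (u + v).x = u.x + v.x := rfl
  have hy : (u + v).y = u.y + v.y := rfl
  rw [Prod.ext_iff]
  constructor <;> simp [hx, hy] <;> ring

/-- The monoidality morphisms of `F(a,b)`:
`F(a,b)_⊕(x+yε, x'+y'ε) = (b(x+x'), F(a,b)((x+yε)+(x'+y'ε)))`. -/
def Fm (a b : ℤ) (u v : Dual) : Fobj a b u + Fobj a b v ⟶ Fobj a b (u + v) :=
  homMk (b * (u.x + v.x)) (Fobj_add a b u v)

/-- The (identity-component) associo-commutator of the strict symmetric 2-group `Dual`. -/
def bDual (u v w s : Dual) : (u + v) + (w + s) ⟶ (u + w) + (v + s) :=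
  homMk 0 (add_add_add_comm u v w s)

/-- The (identity-component) associator of the strict monoidal structure on `Dual`. -/
def aDual (u v w : Dual) : (u + v) + w ⟶ u + (v + w) :=
  homMk 0 (add_assoc u v w)

/-- The (identity-component) left unitor of `Dual`. -/
def lDual (u : Dual) : 0 + u ⟶ u := homMk 0 (zero_add u)

/-- The (identity-component) right unitor of `Dual`. -/
def rDual (u : Dual) : u + 0 ⟶ u := homMk 0 (add_zero u)

namespace Dual

lemma hom_ext_iff {u v : Dual} {f g : u ⟶ v} : f = g ↔ homVal f = homVal g :=
  ⟨congrArg homVal, Subtype.ext⟩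

@[simp]
lemma homVal_comp {u v w : Dual} (f : u ⟶ v) (g : v ⟶ w) : homVal (f ≫ g) = homVal f + homVal g :=
  rfl

@[simp]
lemma homVal_id (u : Dual) : homVal (𝟙 u) = 0 := rfl

@[simp]
lemma add_x (u v : Dual) : (u + v).x = u.x + v.x := rfl

lemma x_surjective : Function.Surjective Dual.x :=
  fun x => ⟨show ℤ × ℤ from (x, 0), rfl⟩

end Dual

open Dual

@[simp]
lemma homVal_tHom {u v w s : Dual} (f : u ⟶ v) (g : w ⟶ s) :
    homVal (tHom f g) = homVal f + homVal g := rfl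

@[simp]
lemma homVal_Fmap (a b : ℤ) {u v : Dual} (f : u ⟶ v) : homVal (Fmap a b f) = a * homVal f := rfl

@[simp]
lemma homVal_Fm (a b : ℤ) (u v : Dual) : homVal (Fm a b u v) = b * (u.x + v.x) := rfl

@[simp]
lemma homVal_aDual (u v w : Dual) : homVal (aDual u v w) = 0 := rfl

def SatisfiesSF1At (a b : ℤ) (u v w : Dual) : Prop :=
  tHom (Fm a b u v) (𝟙 (Fobj a b w)) ≫ Fm a b (u + v) w ≫ Fmap a b (aDual u v w) =
    aDual (Fobj a b u) (Fobj a b v) (Fobj a b w) ≫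
      tHom (𝟙 (Fobj a b u)) (Fm a b v w) ≫ Fm a b u (v + w)

/-- With `x, x', x''` the real parts of `u, v, w`, the two sides are labelled
`b(x + x') + b(x + x' + x'')` and `b(x' + x'') + b(x + x' + x'')`. -/
lemma satisfiesSF1At_iff (a b : ℤ) (u v w : Dual) :
    SatisfiesSF1At a b u v w ↔ b * (u.x - w.x) = 0 := by
  rw [SatisfiesSF1At, hom_ext_iff]
  simp only [homVal_comp, homVal_tHom, homVal_Fm, homVal_id, homVal_Fmap, homVal_aDual, add_x]
  constructor <;> intro h <;> linarith

lemma forall_satisfiesSF1At_iff (a b : ℤ) :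
    (∀ u v w : Dual, SatisfiesSF1At a b u v w) ↔ ∀ x x' : ℤ, b * (x - x') = 0 := by
  simp only [satisfiesSF1At_iff]
  constructor
  · intro h x x'
    obtain ⟨u, rfl⟩ := x_surjective x
    obtain ⟨w, rfl⟩ := x_surjective x'
    exact h u 0 w
  · intro h u _ w
    exact h u.x w.x

lemma forall_mul_sub_eq_zero_iff {R : Type*} [NonAssocRing R] {b : R} :
    (∀ x x' : R, b * (x - x') = 0) ↔ b = 0 :=
  ⟨fun h => by simpa using h 1 0, fun hb x x' => by rw [hb, zero_mul]⟩

/-- For `b ≠ 0` the pair `(F(a,b), F(a,b)_⊕)` does NOT satisfy the monoidal functor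
associativity axiom (SF1); concretely, (SF1) for this pair is equivalent to
`b·(x − x') = 0` for all integers `x, x'`, which fails when `b ≠ 0`. -/
theorem stmt15 (a b : ℤ) (hb : b ≠ 0) :
    ((∀ u v w : Dual,
        tHom (Fm a b u v) (𝟙 (Fobj a b w)) ≫ Fm a b (u + v) w ≫ Fmap a b (aDual u v w) =
          aDual (Fobj a b u) (Fobj a b v) (Fobj a b w) ≫
            tHom (𝟙 (Fobj a b u)) (Fm a b v w) ≫ Fm a b u (v + w)) ↔
      (∀ x x' : ℤ, b * (x - x') = 0)) ∧
    ¬ (∀ u v w : Dual,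
        tHom (Fm a b u v) (𝟙 (Fobj a b w)) ≫ Fm a b (u + v) w ≫ Fmap a b (aDual u v w) =
          aDual (Fobj a b u) (Fobj a b v) (Fobj a b w) ≫
            tHom (𝟙 (Fobj a b u)) (Fm a b v w) ≫ Fm a b u (v + w)) := by
  have hSF1 := forall_satisfiesSF1At_iff a b
  exact ⟨hSF1, fun h => hb (forall_mul_sub_eq_zero_iff.mp (hSF1.mp h))⟩
end

section
/- With G the strict symmetric 2-group of dual integers and (F(a,b), F(a,b)_⊕) as above with b ≠ 0, there exists no isomorphism F_0 : 0 → F(a,b)(0) satisfying the unit axioms (AF2). Concretely, such an F_0 would correspond to an integer n with n = −b·x for all integers x, which is impossible when b ≠ 0. -/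
open CategoryTheory

/-- For `b ≠ 0` there is no isomorphism `F₀ : 0 ⟶ F(a,b)(0)` satisfying the unit axioms
(AF2) for the pair `(F(a,b), F(a,b)_⊕)`; concretely, such an `F₀` would correspond to an
integer `n` with `n = −b·x` for all integers `x`, which is impossible when `b ≠ 0`.
(In the groupoid `Dual` every morphism is invertible, so a morphism `F₀` is the same as
an isomorphism.) -/
theorem stmt16 (a b : ℤ) (hb : b ≠ 0) :
    (¬ ∃ F₀ : (0 : Dual) ⟶ Fobj a b 0,
      (∀ u : Dual,
        tHom F₀ (𝟙 (Fobj a b u)) ≫ Fm a b 0 u ≫ Fmap a b (lDual u) = lDual (Fobj a b u)) ∧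
      (∀ u : Dual,
        tHom (𝟙 (Fobj a b u)) F₀ ≫ Fm a b u 0 ≫ Fmap a b (rDual u) = rDual (Fobj a b u))) ∧
    ¬ ∃ n : ℤ, ∀ x : ℤ, n = -(b * x) := by
  have key : ¬ ∃ n : ℤ, ∀ x : ℤ, n = -(b * x) := by
    rintro ⟨n, hn⟩
    have h0 := hn 0
    have h1 := hn 1
    simp at h0 h1
    exact hb (by omega)
  refine ⟨?_, key⟩
  rintro ⟨F₀, h₁, _⟩
  apply key
  refine ⟨homVal F₀, fun x => ?_⟩
  have h := congrArg homVal (h₁ (show ℤ × ℤ from (x, 0)))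
  have : (homVal F₀ + 0) + (b * (Dual.x 0 + x) + a * 0) = 0 := h
  have hx : Dual.x 0 = 0 := rfl
  rw [hx] at this
  linarith
end

section
/- Every Quang 2-ring (Ann-category) is a Jibladze–Pirashvili categorical ring: if the distributivity isomorphisms d, e satisfy the associator/commutator compatibility axioms (2R1) (i.e. each (x·−, d_{x,−,−}) and (−·z, e_{−,−,z}) is compatible with a⁺ and c), then they satisfy the associo-commutator compatibility axiom (2R1)′: the two Jibladze–Pirashvili pentagon-type squares involving the canonical associo-commutator b commute. -/
open CategoryTheory MonoidalCategory

/-!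
Fixing the left factor, `x · −` together with `d x` is a lax braided monoidal functor for the
additive structure, minus a unit constraint; axioms (2R1) say exactly this. The associo-commutator
`b` is Mathlib's `tensorμ`, a composite of associators and one braiding, so every such functor
carries it across its structure maps; the same applies to `− · z` with `e`.
-/

/-- `associativity` is stated in the inverse form in which axiom (2R1) is given. -/
structure LaxBraidedSemigroupal {C D : Type*} [Category C] [MonoidalCategory C]
    [BraidedCategory C] [Category D] [MonoidalCategory D] [BraidedCategory D] (F : C ⥤ D) where
  μ : ∀ X Y : C, F.obj X ⊗ F.obj Y ⟶ F.obj (X ⊗ Y)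
  μ_natural : ∀ {X X' Y Y' : C} (f : X ⟶ X') (g : Y ⟶ Y'),
    (F.map f ⊗ₘ F.map g) ≫ μ X' Y' = μ X Y ≫ F.map (f ⊗ₘ g)
  associativity : ∀ X Y Z : C,
    (F.obj X ◁ μ Y Z) ≫ μ X (Y ⊗ Z) ≫ F.map (α_ X Y Z).inv =
      (α_ (F.obj X) (F.obj Y) (F.obj Z)).inv ≫ (μ X Y ▷ F.obj Z) ≫ μ (X ⊗ Y) Z
  braided : ∀ X Y : C, μ X Y ≫ F.map (β_ X Y).hom = (β_ (F.obj X) (F.obj Y)).hom ≫ μ Y X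

namespace LaxBraidedSemigroupal

variable {C D : Type*} [Category C] [MonoidalCategory C] [BraidedCategory C]
  [Category D] [MonoidalCategory D] [BraidedCategory D] {F : C ⥤ D} (S : LaxBraidedSemigroupal F)

lemma μ_natural_left {X X' : C} (f : X ⟶ X') (Y : C) :
    (F.map f ▷ F.obj Y) ≫ S.μ X' Y = S.μ X Y ≫ F.map (f ▷ Y) := by
  simpa using S.μ_natural f (𝟙 Y)

lemma μ_natural_right (X : C) {Y Y' : C} (g : Y ⟶ Y') :
    (F.obj X ◁ F.map g) ≫ S.μ X Y' = S.μ X Y ≫ F.map (X ◁ g) := by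
  simpa using S.μ_natural (𝟙 X) g

lemma μ_whiskerRight_comp_μ (X Y Z : C) :
    (S.μ X Y ▷ F.obj Z) ≫ S.μ (X ⊗ Y) Z = (α_ (F.obj X) (F.obj Y) (F.obj Z)).hom ≫
      (F.obj X ◁ S.μ Y Z) ≫ S.μ X (Y ⊗ Z) ≫ F.map (α_ X Y Z).inv := by
  rw [S.associativity, Iso.hom_inv_id_assoc]

lemma whiskerLeft_μ_comp_μ_comp_map_associator_inv (W X Y Z : C) :
    (F.obj W ◁ (F.obj X ◁ S.μ Y Z ≫ S.μ X (Y ⊗ Z))) ≫ S.μ W (X ⊗ (Y ⊗ Z)) ≫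
        F.map (α_ W X (Y ⊗ Z)).inv =
      (α_ (F.obj W) (F.obj X) (F.obj Y ⊗ F.obj Z)).inv ≫ (S.μ W X ⊗ₘ S.μ Y Z) ≫
        S.μ (W ⊗ X) (Y ⊗ Z) := by
  rw [MonoidalCategory.whiskerLeft_comp, Category.assoc, S.associativity W X (Y ⊗ Z),
    associator_inv_naturality_right_assoc, ← tensorHom_def'_assoc]

lemma tensorHom_μ_comp_μ_comp_map_associator_hom (W X Y Z : C) :
    (S.μ W X ⊗ₘ S.μ Y Z) ≫ S.μ (W ⊗ X) (Y ⊗ Z) ≫ F.map (α_ W X (Y ⊗ Z)).hom =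
      (α_ (F.obj W) (F.obj X) (F.obj Y ⊗ F.obj Z)).hom ≫
        (F.obj W ◁ (F.obj X ◁ S.μ Y Z ≫ S.μ X (Y ⊗ Z))) ≫ S.μ W (X ⊗ (Y ⊗ Z)) := by
  rw [← Iso.inv_comp_eq, ← reassoc_of% S.whiskerLeft_μ_comp_μ_comp_map_associator_inv,
    ← F.map_comp, Iso.inv_hom_id, F.map_id, Category.comp_id]

lemma whiskerLeft_μ_comp_μ_comp_map_braiding (X Y Z : C) :
    (F.obj X ◁ S.μ Y Z) ≫ S.μ X (Y ⊗ Z) ≫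
        F.map ((α_ X Y Z).inv ≫ ((β_ X Y).hom ▷ Z) ≫ (α_ Y X Z).hom) =
      (α_ (F.obj X) (F.obj Y) (F.obj Z)).inv ≫ ((β_ (F.obj X) (F.obj Y)).hom ▷ F.obj Z) ≫
        (α_ (F.obj Y) (F.obj X) (F.obj Z)).hom ≫ (F.obj Y ◁ S.μ X Z) ≫ S.μ Y (X ⊗ Z) := by
  rw [F.map_comp, F.map_comp, reassoc_of% (S.associativity X Y Z),
    ← reassoc_of% (S.μ_natural_left (β_ X Y).hom Z), ← comp_whiskerRight_assoc, S.braided,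
    comp_whiskerRight_assoc, reassoc_of% S.μ_whiskerRight_comp_μ]
  simp only [← F.map_comp, Iso.inv_hom_id, F.map_id, Category.comp_id]

theorem tensorHom_μ_comp_μ_comp_map_tensorμ (W X Y Z : C) :
    (S.μ W X ⊗ₘ S.μ Y Z) ≫ S.μ (W ⊗ X) (Y ⊗ Z) ≫ F.map (tensorμ W X Y Z) =
      tensorμ (F.obj W) (F.obj X) (F.obj Y) (F.obj Z) ≫
        (S.μ W Y ⊗ₘ S.μ X Z) ≫ S.μ (W ⊗ Y) (X ⊗ Z) := by
  have hsplit : tensorμ W X Y Z = (α_ W X (Y ⊗ Z)).hom ≫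
      (W ◁ ((α_ X Y Z).inv ≫ ((β_ X Y).hom ▷ Z) ≫ (α_ Y X Z).hom)) ≫ (α_ W Y (X ⊗ Z)).inv := by
    simp only [tensorμ, MonoidalCategory.whiskerLeft_comp, Category.assoc]
  rw [hsplit, F.map_comp, F.map_comp, reassoc_of% S.tensorHom_μ_comp_μ_comp_map_associator_hom,
    ← reassoc_of% S.μ_natural_right, ← MonoidalCategory.whiskerLeft_comp_assoc, Category.assoc,
    S.whiskerLeft_μ_comp_μ_comp_map_braiding, MonoidalCategory.whiskerLeft_comp_assoc,
    MonoidalCategory.whiskerLeft_comp_assoc, MonoidalCategory.whiskerLeft_comp_assoc,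
    S.whiskerLeft_μ_comp_μ_comp_map_associator_inv]
  simp only [tensorμ, Category.assoc]

end LaxBraidedSemigroupal

theorem stmt17_general {R : Type*} [Groupoid R] [MonoidalCategory R] [SymmetricCategory R]
    -- the multiplicative monoidal structure (as a bifunctor)
    (mul : R → R → R)
    (mulMap : ∀ {x y z w : R}, (x ⟶ y) → (z ⟶ w) → (mul x z ⟶ mul y w))
    (hmulId : ∀ x y : R, mulMap (𝟙 x) (𝟙 y) = 𝟙 (mul x y))
    (hmulComp : ∀ {x y z x' y' z' : R} (f : x ⟶ y) (g : y ⟶ z) (f' : x' ⟶ y') (g' : y' ⟶ z'),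
      mulMap (f ≫ g) (f' ≫ g') = mulMap f f' ≫ mulMap g g')
    -- the distributors
    (d : ∀ x y z : R, mul x y ⊗ mul x z ≅ mul x (y ⊗ z))
    (e : ∀ x y z : R, mul x z ⊗ mul y z ≅ mul (x ⊗ y) z)
    (hdnat : ∀ {x y y' z z' : R} (g : y ⟶ y') (h : z ⟶ z'),
      (mulMap (𝟙 x) g ⊗ₘ mulMap (𝟙 x) h) ≫ (d x y' z').hom =
        (d x y z).hom ≫ mulMap (𝟙 x) (g ⊗ₘ h))
    (henat : ∀ {x x' y y' z : R} (f : x ⟶ x') (g : y ⟶ y'),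
      (mulMap f (𝟙 z) ⊗ₘ mulMap g (𝟙 z)) ≫ (e x' y' z).hom =
        (e x y z).hom ≫ mulMap (f ⊗ₘ g) (𝟙 z))
    -- axiom (2R1): compatibility of `d` and `e` with the associator `a⁺`
    (h2R1da : ∀ x y z t : R,
      (mul x y ◁ (d x z t).hom) ≫ (d x y (z ⊗ t)).hom ≫ mulMap (𝟙 x) (α_ y z t).inv =
        (α_ (mul x y) (mul x z) (mul x t)).inv ≫ ((d x y z).hom ▷ mul x t) ≫
          (d x (y ⊗ z) t).hom)
    (h2R1ea : ∀ x y z t : R,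
      (mul x t ◁ (e y z t).hom) ≫ (e x (y ⊗ z) t).hom ≫ mulMap (α_ x y z).inv (𝟙 t) =
        (α_ (mul x t) (mul y t) (mul z t)).inv ≫ ((e x y t).hom ▷ mul z t) ≫
          (e (x ⊗ y) z t).hom)
    -- axiom (2R1): compatibility of `d` and `e` with the commutator `c`
    (h2R1dc : ∀ x y z : R,
      (d x y z).hom ≫ mulMap (𝟙 x) (β_ y z).hom =
        (β_ (mul x y) (mul x z)).hom ≫ (d x z y).hom)
    (h2R1ec : ∀ x y z : R,
      (e y z x).hom ≫ mulMap (β_ y z).hom (𝟙 x) =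
        (β_ (mul y x) (mul z x)).hom ≫ (e z y x).hom) :
    -- conclusion: axiom (2R1)′
    (∀ x y z t u : R,
      ((d x y z).hom ⊗ₘ (d x t u).hom) ≫ (d x (y ⊗ z) (t ⊗ u)).hom ≫
          mulMap (𝟙 x) (ac y z t u) =
        ac (mul x y) (mul x z) (mul x t) (mul x u) ≫
          ((d x y t).hom ⊗ₘ (d x z u).hom) ≫ (d x (y ⊗ t) (z ⊗ u)).hom) ∧
    (∀ x y z t u : R,
      ((e x y u).hom ⊗ₘ (e z t u).hom) ≫ (e (x ⊗ y) (z ⊗ t) u).hom ≫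
          mulMap (ac x y z t) (𝟙 u) =
        ac (mul x u) (mul y u) (mul z u) (mul t u) ≫
          ((e x z u).hom ⊗ₘ (e y t u).hom) ≫ (e (x ⊗ z) (y ⊗ t) u).hom) := by
  refine ⟨fun x y z t u => ?_, fun x y z t u => ?_⟩
  · let F : R ⥤ R :=
      { obj := mul x
        map := mulMap (𝟙 x)
        map_id := hmulId x
        map_comp := fun f g => by simpa using hmulComp (𝟙 x) (𝟙 x) f g }
    let S : LaxBraidedSemigroupal F :=
      ⟨fun y z => (d x y z).hom, fun f g => hdnat f g, h2R1da x, h2R1dc x⟩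
    exact S.tensorHom_μ_comp_μ_comp_map_tensorμ y z t u
  · let F : R ⥤ R :=
      { obj := (mul · u)
        map := (mulMap · (𝟙 u))
        map_id := (hmulId · u)
        map_comp := fun f g => by simpa using hmulComp f g (𝟙 u) (𝟙 u) }
    let S : LaxBraidedSemigroupal F :=
      ⟨fun y z => (e y z u).hom, fun f g => henat f g, (h2R1ea · · · u), h2R1ec u⟩
    exact S.tensorHom_μ_comp_μ_comp_map_tensorμ x y z t

/-- Every Quang 2-ring (Ann-category) is a Jibladze–Pirashvili categorical ring: if the
distributors `d, e` satisfy the associator/commutator compatibility axioms (2R1) (i.e.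
each `(x·−, d_{x,−,−})` and `(−·z, e_{−,−,z})` is compatible with `a⁺` and `c`), then
they satisfy the associo-commutator compatibility axiom (2R1)′: the two
Jibladze–Pirashvili squares involving the canonical associo-commutator `b` commute.
Here the additive symmetric 2-group structure is written `⊗` (Mathlib's monoidal
notation), the multiplication is the bifunctor data `(mul, mulMap)`, and `b = ac` is the
canonical associo-commutator built from the associator and the braiding. -/
theorem stmt17 {R : Type*} [Groupoid R] [MonoidalCategory R] [SymmetricCategory R]
    (hinv : ∀ x : R, ∃ y : R, Nonempty (x ⊗ y ≅ 𝟙_ R) ∧ Nonempty (y ⊗ x ≅ 𝟙_ R))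
    -- the multiplicative monoidal structure (as a bifunctor)
    (mul : R → R → R)
    (mulMap : ∀ {x y z w : R}, (x ⟶ y) → (z ⟶ w) → (mul x z ⟶ mul y w))
    (hmulId : ∀ x y : R, mulMap (𝟙 x) (𝟙 y) = 𝟙 (mul x y))
    (hmulComp : ∀ {x y z x' y' z' : R} (f : x ⟶ y) (g : y ⟶ z) (f' : x' ⟶ y') (g' : y' ⟶ z'),
      mulMap (f ≫ g) (f' ≫ g') = mulMap f f' ≫ mulMap g g')
    -- the distributors
    (d : ∀ x y z : R, mul x y ⊗ mul x z ≅ mul x (y ⊗ z))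
    (e : ∀ x y z : R, mul x z ⊗ mul y z ≅ mul (x ⊗ y) z)
    (hdnat : ∀ {x y y' z z' : R} (g : y ⟶ y') (h : z ⟶ z'),
      (mulMap (𝟙 x) g ⊗ₘ mulMap (𝟙 x) h) ≫ (d x y' z').hom =
        (d x y z).hom ≫ mulMap (𝟙 x) (g ⊗ₘ h))
    (henat : ∀ {x x' y y' z : R} (f : x ⟶ x') (g : y ⟶ y'),
      (mulMap f (𝟙 z) ⊗ₘ mulMap g (𝟙 z)) ≫ (e x' y' z).hom =
        (e x y z).hom ≫ mulMap (f ⊗ₘ g) (𝟙 z))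
    -- axiom (2R1): compatibility of `d` and `e` with the associator `a⁺`
    (h2R1da : ∀ x y z t : R,
      (mul x y ◁ (d x z t).hom) ≫ (d x y (z ⊗ t)).hom ≫ mulMap (𝟙 x) (α_ y z t).inv =
        (α_ (mul x y) (mul x z) (mul x t)).inv ≫ ((d x y z).hom ▷ mul x t) ≫
          (d x (y ⊗ z) t).hom)
    (h2R1ea : ∀ x y z t : R,
      (mul x t ◁ (e y z t).hom) ≫ (e x (y ⊗ z) t).hom ≫ mulMap (α_ x y z).inv (𝟙 t) =
        (α_ (mul x t) (mul y t) (mul z t)).inv ≫ ((e x y t).hom ▷ mul z t) ≫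
          (e (x ⊗ y) z t).hom)
    -- axiom (2R1): compatibility of `d` and `e` with the commutator `c`
    (h2R1dc : ∀ x y z : R,
      (d x y z).hom ≫ mulMap (𝟙 x) (β_ y z).hom =
        (β_ (mul x y) (mul x z)).hom ≫ (d x z y).hom)
    (h2R1ec : ∀ x y z : R,
      (e y z x).hom ≫ mulMap (β_ y z).hom (𝟙 x) =
        (β_ (mul y x) (mul z x)).hom ≫ (e z y x).hom) :
    -- conclusion: axiom (2R1)′
    (∀ x y z t u : R,
      ((d x y z).hom ⊗ₘ (d x t u).hom) ≫ (d x (y ⊗ z) (t ⊗ u)).hom ≫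
          mulMap (𝟙 x) (ac y z t u) =
        ac (mul x y) (mul x z) (mul x t) (mul x u) ≫
          ((d x y t).hom ⊗ₘ (d x z u).hom) ≫ (d x (y ⊗ t) (z ⊗ u)).hom) ∧
    (∀ x y z t u : R,
      ((e x y u).hom ⊗ₘ (e z t u).hom) ≫ (e (x ⊗ y) (z ⊗ t) u).hom ≫
          mulMap (ac x y z t) (𝟙 u) =
        ac (mul x u) (mul y u) (mul z u) (mul t u) ≫
          ((e x z u).hom ⊗ₘ (e y t u).hom) ≫ (e (x ⊗ z) (y ⊗ t) u).hom) :=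
  stmt17_general mul mulMap hmulId hmulComp d e hdnat henat h2R1da h2R1ea h2R1dc h2R1ec
end

section
/- Let G, G' be symmetric 2-groups (symmetric monoidal groupoids with weak inverses). If (F, F_⊕) satisfies the compatibility axioms (SF1) with the associators and (SF2) with the commutators, then the unique unit isomorphism F_0 : 0' → F0 making (F, F_⊕, F_0) a monoidal functor also automatically makes it a symmetric monoidal functor; i.e., a pair (F, F_⊕) satisfying (SF1)-(SF2) extends uniquely to a morphism of symmetric 2-groups. -/
/-!
By (SF1) the maps `Fm 𝟙 x ≫ F(λ_x) : F𝟙 ⊗ Fx ⟶ Fx` form an associative action of `F𝟙` on the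
objects `Fx`. As `F𝟙` has a weak inverse, whiskering by `F𝟙` is bijective on morphisms, so the
left unit axiom at `x = 𝟙`, which reads `F₀ ▷ F𝟙 = λ ≫ (Fm 𝟙 𝟙 ≫ F(λ_𝟙))⁻¹`, has exactly one
solution `F₀`. (SF2) and the braiding turn left unitality at `x` into right unitality at `x`;
right unitality at `𝟙` plus associativity of the action gives left unitality at every `x`
after cancelling `F𝟙 ◁ -`.
-/

open CategoryTheory MonoidalCategory

namespace CategoryTheory.MonoidalCategory

variable {C : Type*} [Category C] [MonoidalCategory C] {A B : C}

lemma whiskerRight_bijective_of_iso_unit {W : C} (j : W ≅ 𝟙_ C) :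
    Function.Bijective (fun f : A ⟶ B => f ▷ W) := by
  convert ((whiskerLeftIso A j ≪≫ ρ_ A).symm.homCongr (whiskerLeftIso B j ≪≫ ρ_ B).symm).bijective
    using 1
  funext f
  calc f ▷ W = A ◁ j.hom ≫ f ▷ 𝟙_ C ≫ B ◁ j.inv := by rw [whisker_exchange_assoc]; simp
    _ = _ := by simp [whiskerRight_id]

lemma whiskerLeft_bijective_of_iso_unit {W : C} (j : W ≅ 𝟙_ C) :
    Function.Bijective (fun f : A ⟶ B => W ◁ f) := by
  convert ((whiskerRightIso j A ≪≫ λ_ A).symm.homCongr (whiskerRightIso j B ≪≫ λ_ B).symm).bijective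
    using 1
  funext f
  calc W ◁ f = j.hom ▷ A ≫ 𝟙_ C ◁ f ≫ j.inv ▷ B := by rw [← whisker_exchange_assoc]; simp
    _ = _ := by simp [id_whiskerLeft]

lemma whiskerRight_whiskerRight_bijective {Z y : C} (j : Z ⊗ y ≅ 𝟙_ C) :
    Function.Bijective (fun f : A ⟶ B => f ▷ Z ▷ y) := by
  convert ((α_ A Z y).symm.homCongr (α_ B Z y).symm).bijective.comp
    (whiskerRight_bijective_of_iso_unit (A := A) (B := B) j) using 1
  funext f
  simp [whiskerRight_tensor]

lemma whiskerLeft_whiskerLeft_bijective {Z y : C} (i : y ⊗ Z ≅ 𝟙_ C) :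
    Function.Bijective (fun f : A ⟶ B => y ◁ Z ◁ f) := by
  convert ((α_ y Z A).homCongr (α_ y Z B)).bijective.comp
    (whiskerLeft_bijective_of_iso_unit (A := A) (B := B) i) using 1
  funext f
  simp [tensor_whiskerLeft]

lemma whiskerRight_injective_of_tensor_iso_unit {Z y : C} (j : Z ⊗ y ≅ 𝟙_ C) :
    Function.Injective (fun f : A ⟶ B => f ▷ Z) :=
  (whiskerRight_whiskerRight_bijective j).injective.of_comp (f := fun g => g ▷ y)

lemma whiskerLeft_injective_of_tensor_iso_unit {Z y : C} (i : y ⊗ Z ≅ 𝟙_ C) :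
    Function.Injective (fun f : A ⟶ B => Z ◁ f) :=
  (whiskerLeft_whiskerLeft_bijective i).injective.of_comp (f := fun g => y ◁ g)

lemma whiskerRight_surjective_of_tensor_iso_unit {Z y : C} (j : Z ⊗ y ≅ 𝟙_ C)
    (i : y ⊗ Z ≅ 𝟙_ C) : Function.Surjective (fun f : A ⟶ B => f ▷ Z) :=
  (whiskerRight_whiskerRight_bijective j).surjective.of_comp_left (f := fun g => g ▷ y)
    (whiskerRight_injective_of_tensor_iso_unit i)

end CategoryTheory.MonoidalCategory

section UnitAction

variable {G G' : Type*} [Category G] [MonoidalCategory G] [Category G'] [MonoidalCategory G']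
  (F : G ⥤ G') (Fm : ∀ x y : G, F.obj x ⊗ F.obj y ⟶ F.obj (x ⊗ y))

def unitAction (x : G) : F.obj (𝟙_ G) ⊗ F.obj x ⟶ F.obj x :=
  Fm (𝟙_ G) x ≫ F.map (λ_ x).hom

variable {F Fm}

lemma isIso_unitAction (hiso : ∀ x y : G, IsIso (Fm x y)) (x : G) :
    IsIso (unitAction F Fm x) := by
  have := hiso (𝟙_ G) x
  unfold unitAction
  infer_instance

lemma unitAction_assoc
    (hnat : ∀ {x x' y y' : G} (f : x ⟶ x') (g : y ⟶ y'),
      (F.map f ⊗ₘ F.map g) ≫ Fm x' y' = Fm x y ≫ F.map (f ⊗ₘ g))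
    (hSF1 : ∀ x y z : G,
      (Fm x y ▷ F.obj z) ≫ Fm (x ⊗ y) z ≫ F.map (α_ x y z).hom =
        (α_ (F.obj x) (F.obj y) (F.obj z)).hom ≫ (F.obj x ◁ Fm y z) ≫ Fm x (y ⊗ z))
    (x : G) :
    (unitAction F Fm (𝟙_ G) ▷ F.obj x) ≫ unitAction F Fm x =
      (α_ _ _ _).hom ≫ (F.obj (𝟙_ G) ◁ unitAction F Fm x) ≫ unitAction F Fm x := by
  have natLeft : (F.map (λ_ (𝟙_ G)).hom ▷ F.obj x) ≫ Fm (𝟙_ G) x =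
      Fm (𝟙_ G ⊗ 𝟙_ G) x ≫ F.map ((λ_ (𝟙_ G)).hom ▷ x) := by
    simpa [tensorHom_id] using hnat (λ_ (𝟙_ G)).hom (𝟙 x)
  have natRight : (F.obj (𝟙_ G) ◁ F.map (λ_ x).hom) ≫ Fm (𝟙_ G) x =
      Fm (𝟙_ G) (𝟙_ G ⊗ x) ≫ F.map (𝟙_ G ◁ (λ_ x).hom) := by
    simpa [id_tensorHom] using hnat (𝟙 (𝟙_ G)) (λ_ x).hom
  have coherence : (λ_ (𝟙_ G)).hom ▷ x ≫ (λ_ x).hom =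
      (α_ (𝟙_ G) (𝟙_ G) x).hom ≫ 𝟙_ G ◁ (λ_ x).hom ≫ (λ_ x).hom := by
    monoidal
  calc (unitAction F Fm (𝟙_ G) ▷ F.obj x) ≫ unitAction F Fm x
      = (Fm (𝟙_ G) (𝟙_ G) ▷ F.obj x) ≫ Fm (𝟙_ G ⊗ 𝟙_ G) x ≫
          F.map ((λ_ (𝟙_ G)).hom ▷ x ≫ (λ_ x).hom) := by
        simp [unitAction, reassoc_of% natLeft]
    _ = (Fm (𝟙_ G) (𝟙_ G) ▷ F.obj x) ≫ Fm (𝟙_ G ⊗ 𝟙_ G) x ≫ F.map (α_ (𝟙_ G) (𝟙_ G) x).hom ≫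
          F.map (𝟙_ G ◁ (λ_ x).hom ≫ (λ_ x).hom) := by
        rw [coherence, F.map_comp]
    _ = (α_ _ _ _).hom ≫ (F.obj (𝟙_ G) ◁ unitAction F Fm x) ≫ unitAction F Fm x := by
        rw [reassoc_of% (hSF1 (𝟙_ G) (𝟙_ G) x)]
        simp [unitAction, reassoc_of% natRight]

lemma leftUnitality_of_rightUnitality_unit (hiso : ∀ x y : G, IsIso (Fm x y))
    (hnat : ∀ {x x' y y' : G} (f : x ⟶ x') (g : y ⟶ y'),
      (F.map f ⊗ₘ F.map g) ≫ Fm x' y' = Fm x y ≫ F.map (f ⊗ₘ g))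
    (hSF1 : ∀ x y z : G,
      (Fm x y ▷ F.obj z) ≫ Fm (x ⊗ y) z ≫ F.map (α_ x y z).hom =
        (α_ (F.obj x) (F.obj y) (F.obj z)).hom ≫ (F.obj x ◁ Fm y z) ≫ Fm x (y ⊗ z))
    {y : G'} (i : y ⊗ F.obj (𝟙_ G) ≅ 𝟙_ G') {u : 𝟙_ G' ⟶ F.obj (𝟙_ G)}
    (hu : (F.obj (𝟙_ G) ◁ u) ≫ unitAction F Fm (𝟙_ G) = (ρ_ (F.obj (𝟙_ G))).hom) (x : G) :
    (u ▷ F.obj x) ≫ unitAction F Fm x = (λ_ (F.obj x)).hom := by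
  have := isIso_unitAction hiso x
  have hassoc : unitAction F Fm (𝟙_ G) ▷ F.obj x =
      (α_ _ _ _).hom ≫ (F.obj (𝟙_ G) ◁ unitAction F Fm x) :=
    (cancel_mono _).1 (by rw [Category.assoc]; exact unitAction_assoc hnat hSF1 x)
  apply whiskerLeft_injective_of_tensor_iso_unit i
  dsimp only
  calc F.obj (𝟙_ G) ◁ ((u ▷ F.obj x) ≫ unitAction F Fm x)
      = (F.obj (𝟙_ G) ◁ u ▷ F.obj x) ≫ (α_ _ _ _).inv ≫ (unitAction F Fm (𝟙_ G) ▷ F.obj x) := by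
        simp [hassoc]
    _ = (α_ _ _ _).inv ≫ ((F.obj (𝟙_ G) ◁ u) ≫ unitAction F Fm (𝟙_ G)) ▷ F.obj x := by
        rw [associator_inv_naturality_middle_assoc, comp_whiskerRight]
    _ = F.obj (𝟙_ G) ◁ (λ_ (F.obj x)).hom := by
        rw [hu, ← triangle]
        simp

lemma rightUnitality_of_leftUnitality [BraidedCategory G] [BraidedCategory G']
    (hSF2 : ∀ x y : G, Fm x y ≫ F.map (β_ x y).hom = (β_ (F.obj x) (F.obj y)).hom ≫ Fm y x)
    {u : 𝟙_ G' ⟶ F.obj (𝟙_ G)} {x : G}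
    (hu : (u ▷ F.obj x) ≫ unitAction F Fm x = (λ_ (F.obj x)).hom) :
    (F.obj x ◁ u) ≫ Fm x (𝟙_ G) ≫ F.map (ρ_ x).hom = (ρ_ (F.obj x)).hom := by
  calc (F.obj x ◁ u) ≫ Fm x (𝟙_ G) ≫ F.map (ρ_ x).hom
      = (F.obj x ◁ u) ≫ (Fm x (𝟙_ G) ≫ F.map (β_ x (𝟙_ G)).hom) ≫ F.map (λ_ x).hom := by
        rw [← braiding_leftUnitor, F.map_comp]
        simp only [Category.assoc]
    _ = (β_ (F.obj x) (𝟙_ G')).hom ≫ (u ▷ F.obj x) ≫ unitAction F Fm x := by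
        rw [hSF2]
        simp only [Category.assoc, BraidedCategory.braiding_naturality_right_assoc]
        rfl
    _ = (ρ_ (F.obj x)).hom := by
        rw [hu, braiding_leftUnitor]

end UnitAction

theorem stmt18_general {G G' : Type*}
    [Groupoid G] [MonoidalCategory G] [SymmetricCategory G]
    [Groupoid G'] [MonoidalCategory G'] [SymmetricCategory G']
    (hinvG' : ∀ x : G', ∃ y : G', Nonempty (x ⊗ y ≅ 𝟙_ G') ∧ Nonempty (y ⊗ x ≅ 𝟙_ G'))
    (F : G ⥤ G') (Fm : ∀ x y : G, F.obj x ⊗ F.obj y ⟶ F.obj (x ⊗ y))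
    (hiso : ∀ x y : G, IsIso (Fm x y))
    (hnat : ∀ {x x' y y' : G} (f : x ⟶ x') (g : y ⟶ y'),
      (F.map f ⊗ₘ F.map g) ≫ Fm x' y' = Fm x y ≫ F.map (f ⊗ₘ g))
    (hSF1 : ∀ x y z : G,
      (Fm x y ▷ F.obj z) ≫ Fm (x ⊗ y) z ≫ F.map (α_ x y z).hom =
        (α_ (F.obj x) (F.obj y) (F.obj z)).hom ≫ (F.obj x ◁ Fm y z) ≫ Fm x (y ⊗ z))
    (hSF2 : ∀ x y : G,
      Fm x y ≫ F.map (β_ x y).hom = (β_ (F.obj x) (F.obj y)).hom ≫ Fm y x) :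
    ∃! F₀ : 𝟙_ G' ⟶ F.obj (𝟙_ G), IsIso F₀ ∧
      (∀ x : G, (F₀ ▷ F.obj x) ≫ Fm (𝟙_ G) x ≫ F.map (λ_ x).hom = (λ_ (F.obj x)).hom) ∧
      (∀ x : G, (F.obj x ◁ F₀) ≫ Fm x (𝟙_ G) ≫ F.map (ρ_ x).hom = (ρ_ (F.obj x)).hom) := by
  obtain ⟨y, ⟨j⟩, ⟨i⟩⟩ := hinvG' (F.obj (𝟙_ G))
  have := isIso_unitAction hiso (𝟙_ G)
  obtain ⟨F₀, hF₀⟩ := whiskerRight_surjective_of_tensor_iso_unit j i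
    ((λ_ (F.obj (𝟙_ G))).hom ≫ inv (unitAction F Fm (𝟙_ G)))
  have hunitLeft : (F₀ ▷ F.obj (𝟙_ G)) ≫ unitAction F Fm (𝟙_ G) = (λ_ (F.obj (𝟙_ G))).hom := by
    simp only at hF₀
    simp [hF₀]
  have hunitRight : (F.obj (𝟙_ G) ◁ F₀) ≫ unitAction F Fm (𝟙_ G) = (ρ_ (F.obj (𝟙_ G))).hom := by
    simpa [unitAction, unitors_equal] using rightUnitality_of_leftUnitality hSF2 hunitLeft
  have hleft := leftUnitality_of_rightUnitality_unit hiso hnat hSF1 i hunitRight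
  refine ⟨F₀, ⟨inferInstance, hleft, fun x => rightUnitality_of_leftUnitality hSF2 (hleft x)⟩, ?_⟩
  rintro F₀' ⟨-, hleft', -⟩
  exact whiskerRight_injective_of_tensor_iso_unit j
    ((cancel_mono _).1 ((hleft' (𝟙_ G)).trans hunitLeft.symm))

/-- Let `G, G'` be symmetric 2-groups (symmetric monoidal groupoids with weak inverses).
A pair `(F, Fm)` satisfying the associator compatibility (SF1) and the commutator
compatibility (SF2) extends uniquely to a morphism of symmetric 2-groups: there is a
unique unit isomorphism `F₀ : 𝟙_ G' ⟶ F.obj (𝟙_ G)` satisfying the unit axioms (SF3),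
and with it `(F, Fm, F₀)` is a symmetric monoidal functor. -/
theorem stmt18 {G G' : Type*}
    [Groupoid G] [MonoidalCategory G] [SymmetricCategory G]
    [Groupoid G'] [MonoidalCategory G'] [SymmetricCategory G']
    (hinvG : ∀ x : G, ∃ y : G, Nonempty (x ⊗ y ≅ 𝟙_ G) ∧ Nonempty (y ⊗ x ≅ 𝟙_ G))
    (hinvG' : ∀ x : G', ∃ y : G', Nonempty (x ⊗ y ≅ 𝟙_ G') ∧ Nonempty (y ⊗ x ≅ 𝟙_ G'))
    (F : G ⥤ G') (Fm : ∀ x y : G, F.obj x ⊗ F.obj y ⟶ F.obj (x ⊗ y))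
    (hiso : ∀ x y : G, IsIso (Fm x y))
    (hnat : ∀ {x x' y y' : G} (f : x ⟶ x') (g : y ⟶ y'),
      (F.map f ⊗ₘ F.map g) ≫ Fm x' y' = Fm x y ≫ F.map (f ⊗ₘ g))
    (hSF1 : ∀ x y z : G,
      (Fm x y ▷ F.obj z) ≫ Fm (x ⊗ y) z ≫ F.map (α_ x y z).hom =
        (α_ (F.obj x) (F.obj y) (F.obj z)).hom ≫ (F.obj x ◁ Fm y z) ≫ Fm x (y ⊗ z))
    (hSF2 : ∀ x y : G,
      Fm x y ≫ F.map (β_ x y).hom = (β_ (F.obj x) (F.obj y)).hom ≫ Fm y x) :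
    ∃! F₀ : 𝟙_ G' ⟶ F.obj (𝟙_ G), IsIso F₀ ∧
      (∀ x : G, (F₀ ▷ F.obj x) ≫ Fm (𝟙_ G) x ≫ F.map (λ_ x).hom = (λ_ (F.obj x)).hom) ∧
      (∀ x : G, (F.obj x ◁ F₀) ≫ Fm x (𝟙_ G) ≫ F.map (ρ_ x).hom = (ρ_ (F.obj x)).hom) :=
  stmt18_general hinvG' F Fm hiso hnat hSF1 hSF2
end
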